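/- arXiv:1403.2942 — 8 statements merged into one kernel-verified Lean document; each statement's English description precedes it below -/
import Mathlib

section
/- Let R = ℤ[x₁, x_p, x_{p²}, …] be a polynomial ring and fix a ∈ ℕ. If z is a p-typical Witt vector over R such that for all n, the p^n-th ghost component of z is a homogeneous polynomial of degree a·p^n under the weighting where x_{p^i} has weight p^i, then the p^n-th Witt component of z is also a homogeneous polynomial of degree a·p^n under the same weighting. -/
open WittVector MvPolynomial Finset

lemma MvPolynomial.IsWeightedHomogeneous.of_C_mul {σ R M : Type*} [CommSemiring R]
    [AddCommMonoid M] {w : σ → M} {φ : MvPolynomial σ R} {r : R} {m : M}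
    (hr : IsLeftRegular r) (h : IsWeightedHomogeneous w (C r * φ) m) :
    IsWeightedHomogeneous w φ m := by
  intro d hd
  refine h fun h0 => hd (hr (?_ : r * coeff d φ = r * 0))
  rwa [mul_zero, ← coeff_C_mul]

lemma WittVector.ghostComponent_eq_sum_range_add {p : ℕ} [Fact p.Prime] {R : Type*} [CommRing R]
    (n : ℕ) (x : WittVector p R) :
    ghostComponent n x =
      ∑ i ∈ range n, (p : R) ^ i * x.coeff i ^ p ^ (n - i) + (p : R) ^ n * x.coeff n := by
  rw [ghostComponent_apply, aeval_wittPolynomial, sum_range_succ, Nat.sub_self, pow_zero, pow_one]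

/-- The Witt components are recovered from the ghost components by the recursion
`pⁿ xₙ = wₙ - Σ_{i<n} pⁱ xᵢ^{p^{n-i}}`, which preserves homogeneity once `p` can be cancelled. -/
theorem WittVector.isWeightedHomogeneous_coeff_of_ghostComponent {p : ℕ} [Fact p.Prime]
    {σ R M : Type*} [CommRing R] [AddCommMonoid M] (hp : IsLeftRegular (p : R))
    {w : σ → M} {m : M} (x : WittVector p (MvPolynomial σ R))
    (hghost : ∀ n, IsWeightedHomogeneous w (ghostComponent n x) (p ^ n • m)) (n : ℕ) :
    IsWeightedHomogeneous w (x.coeff n) (p ^ n • m) := by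
  induction n using Nat.strong_induction_on with
  | _ n ih =>
    have hC : ∀ i, ((p : MvPolynomial σ R) ^ i) = C ((p : R) ^ i) := by
      simp [map_natCast]
    have hlower : IsWeightedHomogeneous w
        (∑ i ∈ range n, (p : MvPolynomial σ R) ^ i * x.coeff i ^ p ^ (n - i)) (p ^ n • m) := by
      refine IsWeightedHomogeneous.sum _ _ _ fun i hi => ?_
      have hdeg : p ^ (n - i) • p ^ i • m = p ^ n • m := by
        rw [smul_smul, ← pow_add, Nat.sub_add_cancel (mem_range.1 hi).le]
      rw [hC, ← hdeg]
      exact ((ih i (mem_range.1 hi)).pow _).C_mul _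
    have htop := (hghost n).sub hlower
    rw [ghostComponent_eq_sum_range_add, add_sub_cancel_left, hC] at htop
    exact htop.of_C_mul (hp.pow n)

/-- If all ghost components of a Witt vector over `ℤ[x₁, x_p, x_{p²}, …]` are weighted
homogeneous of degree `a·pⁿ` (with `x_{pⁱ}` of weight `pⁱ`), then so are its Witt components. -/
theorem stmt0 (p : ℕ) [Fact p.Prime] (a : ℕ)
    (z : WittVector p (MvPolynomial ℕ ℤ))
    (hghost : ∀ n : ℕ,
      MvPolynomial.IsWeightedHomogeneous (fun i : ℕ => p ^ i)
        (WittVector.ghostComponent n z) (a * p ^ n)) :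
    ∀ n : ℕ,
      MvPolynomial.IsWeightedHomogeneous (fun i : ℕ => p ^ i)
        (z.coeff n) (a * p ^ n) := by
  have hp : IsLeftRegular (p : ℤ) :=
    (IsRegular.of_ne_zero (Nat.cast_ne_zero.2 (Fact.out : p.Prime).ne_zero)).left
  intro n
  simpa only [smul_eq_mul, mul_comm] using
    isWeightedHomogeneous_coeff_of_ghostComponent (m := a) hp z
      (fun k => by simpa only [smul_eq_mul, mul_comm] using hghost k) n
end

section
/- For any ring R and Witt vectors x, y ∈ W(R), the p^i-th component of the product x·y is a universal polynomial which is homogeneous of degree p^i separately in the x-variables and homogeneous of degree p^i in the y-variables, under the weighting where x_{p^j}, y_{p^j} have weight p^j. -/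
/-!
The `n`-th multiplication polynomial is the Witt structure polynomial of `Φ = X₀ X₁`, computed
over `ℚ` by the recursion `pⁿ Sₙ = Φ((Wₙ(X_c))_c) - ∑_{i<n} pⁱ Sᵢ^{pⁿ⁻ⁱ}`. Giving the variable
`(c, j)` weight `a c * pʲ`, the Witt polynomial `Wₙ` renamed into block `c` has weight `a c * pⁿ`,
so if `Φ` is homogeneous of degree `d` for the weights `a` then by induction every term of the
recursion is homogeneous of degree `d * pⁿ`. For `Φ = X₀ X₁` and `a` the indicator of one factor,
`d = 1`.
-/

open WittVector MvPolynomial Finset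

namespace MvPolynomial.IsWeightedHomogeneous

variable {σ τ ι R : Type*} [CommSemiring R]

theorem rename {M : Type*} [AddCommMonoid M] {w : σ → M} {w' : τ → M} {f : σ → τ}
    (hw : ∀ s, w' (f s) = w s) {φ : MvPolynomial σ R} {m : M}
    (hφ : φ.IsWeightedHomogeneous w m) :
    (MvPolynomial.rename f φ).IsWeightedHomogeneous w' m := by
  classical
  intro d hd
  obtain ⟨u, rfl, hu⟩ := coeff_rename_ne_zero f φ d hd
  rw [← hφ hu, Finsupp.weight_apply, Finsupp.weight_apply,
    Finsupp.sum_mapDomain_index (fun t => zero_smul ℕ (w' t)) (fun _ _ _ => add_smul _ _ _)]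
  exact Finsupp.sum_congr fun s _ => by rw [hw]

theorem mul_weight {w : σ → ℕ} {φ : MvPolynomial σ R} {m : ℕ}
    (hφ : φ.IsWeightedHomogeneous w m) (c : ℕ) :
    φ.IsWeightedHomogeneous (fun s => c * w s) (c * m) := by
  intro d hd
  simp only [← hφ hd, Finsupp.weight_apply, Finsupp.mul_sum, smul_eq_mul]
  exact Finsupp.sum_congr fun _ _ => by ring

theorem bind₁ {a : ι → ℕ} {w : σ → ℕ} {Φ : MvPolynomial ι R} {d e : ℕ}
    (hΦ : Φ.IsWeightedHomogeneous a d) {g : ι → MvPolynomial σ R}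
    (hg : ∀ i, (g i).IsWeightedHomogeneous w (a i * e)) :
    (MvPolynomial.bind₁ g Φ).IsWeightedHomogeneous w (d * e) := by
  rw [Φ.as_sum, map_sum]
  refine IsWeightedHomogeneous.sum _ _ _ fun s hs => ?_
  have hprod := (IsWeightedHomogeneous.prod s.support _ _ fun i _ => (hg i).pow (s i)).C_mul
    (coeff s Φ)
  rw [bind₁_monomial, ← hΦ (mem_support_iff.mp hs), Finsupp.weight_apply, Finsupp.sum,
    Finset.sum_mul]
  simpa only [smul_eq_mul, mul_assoc] using hprod

theorem map {S : Type*} [CommSemiring S] (f : R →+* S) {M : Type*} [AddCommMonoid M]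
    {w : σ → M} {φ : MvPolynomial σ R} {m : M} (hφ : φ.IsWeightedHomogeneous w m) :
    (MvPolynomial.map f φ).IsWeightedHomogeneous w m := fun d hd =>
  hφ fun h => hd (by rw [coeff_map, h, _root_.map_zero])

theorem of_map {S : Type*} [CommSemiring S] {f : R →+* S} (hf : Function.Injective f)
    {M : Type*} [AddCommMonoid M] {w : σ → M} {φ : MvPolynomial σ R} {m : M}
    (h : (MvPolynomial.map f φ).IsWeightedHomogeneous w m) : φ.IsWeightedHomogeneous w m :=
  fun _ hd => h (by rwa [coeff_map, ne_eq, map_eq_zero_iff f hf])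

end MvPolynomial.IsWeightedHomogeneous

namespace WittVector

variable (p : ℕ) {idx : Type*}

theorem isWeightedHomogeneous_wittPolynomial (R : Type*) [CommRing R] (n : ℕ) :
    (wittPolynomial p R n).IsWeightedHomogeneous (p ^ ·) (p ^ n) := by
  refine IsWeightedHomogeneous.sum _ _ _ fun j hj => isWeightedHomogeneous_monomial _ _ _ ?_
  rw [Finsupp.weight_apply, Finsupp.sum_single_index (zero_smul ℕ (p ^ j)), smul_eq_mul,
    ← pow_add, Nat.sub_add_cancel (Nat.lt_succ_iff.mp (mem_range.mp hj))]

variable [Fact p.Prime]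

theorem isWeightedHomogeneous_wittStructureRat {a : idx → ℕ} {Φ : MvPolynomial idx ℚ} {d : ℕ}
    (hΦ : Φ.IsWeightedHomogeneous a d) (n : ℕ) :
    (wittStructureRat p Φ n).IsWeightedHomogeneous (fun v : idx × ℕ => a v.1 * p ^ v.2)
      (d * p ^ n) := by
  induction n using Nat.strong_induction_on with | _ n ih => ?_
  have hW : (bind₁ (fun b => rename (fun i => (b, i)) (wittPolynomial p ℚ n)) Φ
      ).IsWeightedHomogeneous (fun v : idx × ℕ => a v.1 * p ^ v.2) (d * p ^ n) :=
    hΦ.bind₁ fun b => ((isWeightedHomogeneous_wittPolynomial p ℚ n).mul_weight (a b)).rename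
      (f := fun i => (b, i)) fun _ => rfl
  have hsum : (∑ i ∈ range n, C ((p : ℚ) ^ i) * wittStructureRat p Φ i ^ p ^ (n - i)
      ).IsWeightedHomogeneous (fun v : idx × ℕ => a v.1 * p ^ v.2) (d * p ^ n) := by
    refine IsWeightedHomogeneous.sum _ _ _ fun i hi => ?_
    have hin : i ≤ n := (mem_range.mp hi).le
    convert ((ih i (mem_range.mp hi)).pow (p ^ (n - i))).C_mul ((p : ℚ) ^ i) using 1
    rw [smul_eq_mul, mul_left_comm, ← pow_add, Nat.sub_add_cancel hin]
  rw [wittStructureRat_rec]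
  exact (hW.sub hsum).C_mul _

theorem isWeightedHomogeneous_wittStructureInt {a : idx → ℕ} {Φ : MvPolynomial idx ℤ} {d : ℕ}
    (hΦ : Φ.IsWeightedHomogeneous a d) (n : ℕ) :
    (wittStructureInt p Φ n).IsWeightedHomogeneous (fun v : idx × ℕ => a v.1 * p ^ v.2)
      (d * p ^ n) := by
  refine IsWeightedHomogeneous.of_map (f := Int.castRingHom ℚ) Int.cast_injective ?_
  rw [map_wittStructureInt]
  exact isWeightedHomogeneous_wittStructureRat p (hΦ.map _) n

theorem isWeightedHomogeneous_wittMul (b : Fin 2) (n : ℕ) :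
    (wittMul p n).IsWeightedHomogeneous (fun v : Fin 2 × ℕ => if v.1 = b then p ^ v.2 else 0)
      (p ^ n) := by
  have hX : (X 0 * X 1 : MvPolynomial (Fin 2) ℤ).IsWeightedHomogeneous
      (fun c => if c = b then 1 else 0) 1 := by
    have h := (isWeightedHomogeneous_X ℤ (fun c : Fin 2 => if c = b then 1 else 0) 0).mul
      (isWeightedHomogeneous_X ℤ _ 1)
    fin_cases b <;> simpa using h
  have hw : (fun v : Fin 2 × ℕ => if v.1 = b then p ^ v.2 else 0) =
      fun v => (if v.1 = b then 1 else 0) * p ^ v.2 := by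
    ext v; split_ifs <;> simp
  simpa only [hw, one_mul, wittMul] using isWeightedHomogeneous_wittStructureInt p hX n

end WittVector

/-- The `pⁱ`-th component of a product of Witt vectors is given by a universal polynomial
over `ℤ` which is weighted homogeneous of degree `pⁱ` separately in the `x`-variables
(indexed by `(0, j)`, of weight `pʲ`) and in the `y`-variables (indexed by `(1, j)`,
of weight `pʲ`). -/
theorem stmt2 (p : ℕ) [Fact p.Prime] (i : ℕ) :
    ∃ φ : MvPolynomial (Fin 2 × ℕ) ℤ,
      MvPolynomial.IsWeightedHomogeneous
        (fun v : Fin 2 × ℕ => if v.1 = 0 then p ^ v.2 else 0) φ (p ^ i) ∧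
      MvPolynomial.IsWeightedHomogeneous
        (fun v : Fin 2 × ℕ => if v.1 = 1 then p ^ v.2 else 0) φ (p ^ i) ∧
      ∀ (R : Type) [CommRing R] (x y : WittVector p R),
        (x * y).coeff i =
          MvPolynomial.aeval
            (fun v : Fin 2 × ℕ => if v.1 = 0 then x.coeff v.2 else y.coeff v.2) φ := by
  refine ⟨wittMul p i, isWeightedHomogeneous_wittMul p 0 i, isWeightedHomogeneous_wittMul p 1 i,
    fun R _ x y => ?_⟩
  rw [mul_coeff, peval]
  congr 1
  ext ⟨b, j⟩
  fin_cases b <;> simp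
end

section
/- Let x, y be p-typical Witt vectors over a ring R with F(x) = y, where F is the Witt vector Frobenius. Then for each i ≥ 0, y_{p^i} = x_{p^i}^p + p·x_{p^{i+1}} + p·f_{p^i}(x₁, …, x_{p^i}), where f_{p^i} is a polynomial with integer coefficients not involving the variable x_{p^{i+1}}. -/
/-!
The coefficient `x.coeff i` is the component `x_{pⁱ}` of the informal statement. Mathlib defines
the Frobenius through `frobeniusPoly p n = X n ^ p + p * frobeniusPolyAux p n`, where
`frobeniusPolyAux p n` is `X (n + 1)` minus a polynomial in the `X a` and `frobeniusPolyAux p a`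
with `a < n`. By strong induction this correction only involves `X 0, …, X n`, so its negative,
with variables relabelled by `Fin (n + 1)`, is the required `f`.
-/

open WittVector MvPolynomial

theorem X_sub_frobeniusPolyAux_mem_supported (p n : ℕ) :
    X (n + 1) - frobeniusPolyAux p n ∈ supported ℤ (Set.Iic n) := by
  induction n using Nat.strong_induction_on with
  | _ n ih =>
    rw [frobeniusPolyAux_eq, sub_sub_cancel]
    refine Subalgebra.sum_mem _ fun a ha => Subalgebra.sum_mem _ fun j _ => ?_
    have ha : a < n := Finset.mem_range.mp ha
    have hX : X a ∈ supported ℤ (Set.Iic n) := X_mem_supported.mpr (Set.mem_Iic.mpr ha.le)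
    have haux : frobeniusPolyAux p a ∈ supported ℤ (Set.Iic n) := by
      rw [← sub_sub_cancel (X (a + 1)) (frobeniusPolyAux p a)]
      exact Subalgebra.sub_mem _ (X_mem_supported.mpr (Set.mem_Iic.mpr ha))
        (supported_mono (Set.Iic_subset_Iic.mpr ha.le) (ih a ha))
    exact Subalgebra.mul_mem _
      (Subalgebra.mul_mem _ (Subalgebra.pow_mem _ (Subalgebra.pow_mem _ hX _) _)
        (Subalgebra.pow_mem _ haux _))
      (Subalgebra.algebraMap_mem _ _)

theorem exists_rename_finVal_eq_frobeniusPolyAux (p n : ℕ) :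
    ∃ q : MvPolynomial (Fin (n + 1)) ℤ,
      frobeniusPolyAux p n = X (n + 1) - rename Fin.val q := by
  have hvars :
      ↑(X (n + 1) - frobeniusPolyAux p n).vars ⊆ Set.range (Fin.val : Fin (n + 1) → ℕ) :=
    fun k hk => ⟨⟨k, Nat.lt_succ_of_le
      ((mem_supported.mp (X_sub_frobeniusPolyAux_mem_supported p n)) hk)⟩, rfl⟩
  obtain ⟨q, hq⟩ := exists_rename_eq_of_vars_subset_range _ _ Fin.val_injective hvars
  exact ⟨q, by rw [hq, sub_sub_cancel]⟩

/-- If `F(x) = y` for the Witt vector Frobenius, then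
`y_{pⁱ} = x_{pⁱ}^p + p·x_{pⁱ⁺¹} + p·f(x₁, …, x_{pⁱ})` for a universal integer polynomial `f`
in the variables `x₁, …, x_{pⁱ}` only (in particular not involving `x_{pⁱ⁺¹}`). -/
theorem stmt3 (p : ℕ) [Fact p.Prime] (i : ℕ) :
    ∃ f : MvPolynomial (Fin (i + 1)) ℤ,
      ∀ (R : Type) [CommRing R] (x y : WittVector p R),
        WittVector.frobenius x = y →
        y.coeff i = x.coeff i ^ p + p * x.coeff (i + 1) +
          p * MvPolynomial.aeval (fun j : Fin (i + 1) => x.coeff j) f := by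
  obtain ⟨q, hq⟩ := exists_rename_finVal_eq_frobeniusPolyAux p i
  refine ⟨-q, fun R _ x y hxy => ?_⟩
  rw [← hxy, coeff_frobenius, frobeniusPoly, hq]
  simp only [map_add, map_mul, map_pow, map_sub, map_neg, aeval_X, aeval_C, aeval_rename,
    Function.comp_def]
  push_cast
  ring
end

section
/- Let A be a p-torsion-free ring integrally closed in A[1/p] which is Witt-perfect at p, and choose x₁, x₂, … ∈ A with x₁^p ≡ p (mod p²) and x_{n+1}^p ≡ x_n (mod p). Then for all n ≥ 1 and 1 ≤ m ≤ p^n, the set {x ∈ A : x^{p^n} ∈ p^m A} equals the ideal (x_n^m, p)A. -/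
/-!
Put `N = pⁿ` and `X = xₙ`. The congruences give `X ^ N = p * u` with `u ≡ 1 (mod p)`, so `X`
behaves like an element of `p`-adic valuation `1 / N`; the inclusion `(Xᵐ, p) ⊆ {z | pᵐ ∣ z ^ N}`
is then a termwise estimate of the binomial expansion. Conversely, one raises the exponent of
`X` one step at a time: if `z = α * X ^ j + β * p` and `p ^ (j + 1) ∣ z ^ N`, the binomial
expansion forces `p ∣ α ^ N`. Then `α * X ^ (N - 1) / p ∈ A[1/p]` has its `N`-th power in `A`,
so it lies in `A` by integral closedness; multiplying by `X` gives `α * u ∈ X A`, hence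
`α ∈ (X, p)` and `z ∈ (X ^ (j + 1), p)`.
-/

open WittVector

/-- Frobenius `W_{pⁿ⁺¹}(A) → W_{pⁿ}(A)` on finite-length `p`-typical Witt vectors. -/
noncomputable def truncatedFrobenius (p : ℕ) [Fact p.Prime] (A : Type*) [CommRing A] (n : ℕ)
    (x : TruncatedWittVector p (n + 2) A) : TruncatedWittVector p (n + 1) A :=
  WittVector.truncate (n + 1) (WittVector.frobenius x.out)

/-- `A` is Witt-perfect at `p`: all the truncated Frobenius maps are surjective. -/
def IsWittPerfect (p : ℕ) [Fact p.Prime] (A : Type*) [CommRing A] : Prop :=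
  ∀ n : ℕ, Function.Surjective (truncatedFrobenius p A n)

open Ideal Polynomial
open scoped nonZeroDivisors

/-- Up to rounding, this is `(N - m) * (N - k) ≥ 0`. -/
theorem Nat.le_sub_add_mul_div {N m k : ℕ} (hm : m ≤ N) (hk : k ≤ N) :
    m ≤ N - k + m * k / N := by
  rcases le_or_gt (m + k) N with h | h
  · exact (by omega : m ≤ N - k).trans (Nat.le_add_right _ _)
  · have hN : 0 < N := by omega
    have h2 : m + k - N ≤ m * k / N := by
      rw [Nat.le_div_iff_mul_le hN]
      zify [h.le]
      nlinarith [mul_nonneg (sub_nonneg.2 (Int.ofNat_le.2 hm)) (sub_nonneg.2 (Int.ofNat_le.2 hk))]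
    exact le_trans (by omega : m ≤ N - k + (m + k - N)) (Nat.add_le_add_left h2 _)

section

variable {A : Type*} [CommRing A]

theorem pow_dvd_pow_mul_pow_sub {X P u : A} {N m k : ℕ} (hX : X ^ N = P * u) (hm : m ≤ N)
    (hk : k ≤ N) : P ^ m ∣ X ^ (m * k) * P ^ (N - k) := by
  have hXmk : X ^ (m * k) = P ^ (m * k / N) * (u ^ (m * k / N) * X ^ (m * k % N)) := by
    rw [← mul_assoc, ← mul_pow, ← hX, ← pow_mul, ← pow_add, Nat.div_add_mod]
  calc P ^ m ∣ P ^ (m * k / N) * P ^ (N - k) := by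
        rw [← pow_add]; exact pow_dvd_pow P (by linarith [Nat.le_sub_add_mul_div hm hk])
    _ ∣ X ^ (m * k) * P ^ (N - k) :=
        ⟨u ^ (m * k / N) * X ^ (m * k % N), by rw [hXmk]; ring⟩

theorem pow_dvd_pow_of_mem_span_pair {X P u z : A} {N m : ℕ} (hX : X ^ N = P * u) (hm : m ≤ N)
    (hz : z ∈ span {X ^ m, P}) : P ^ m ∣ z ^ N := by
  obtain ⟨α, β, rfl⟩ := mem_span_pair.mp hz
  rw [add_pow]
  refine Finset.dvd_sum fun k hk => ?_
  have hk : k ≤ N := Nat.lt_succ_iff.mp (Finset.mem_range.mp hk)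
  calc P ^ m ∣ X ^ (m * k) * P ^ (N - k) := pow_dvd_pow_mul_pow_sub hX hm hk
    _ ∣ _ := ⟨α ^ k * β ^ (N - k) * N.choose k, by rw [pow_mul]; ring⟩

theorem pow_succ_dvd_add_pow_sub_pow {X P u : A} {N j : ℕ} (hX : X ^ N = P * u)
    (hC : ∀ k, 0 < k → k < N → P ∣ (N.choose k : A)) (hj : j < N) (α β : A) :
    P ^ (j + 1) ∣ (α * X ^ j + β * P) ^ N - (α * X ^ j) ^ N := by
  rw [add_pow, Finset.sum_range_succ, Nat.sub_self, pow_zero, Nat.choose_self, Nat.cast_one,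
    mul_one, mul_one, add_sub_cancel_right]
  refine Finset.dvd_sum fun k hk => ?_
  rcases Nat.eq_zero_or_pos k with rfl | hk0
  · calc P ^ (j + 1) ∣ P ^ N := pow_dvd_pow P hj
      _ ∣ _ := ⟨β ^ N, by rw [Nat.sub_zero, Nat.choose_zero_right, Nat.cast_one]; ring⟩
  · have hkN : k < N := Finset.mem_range.mp hk
    obtain ⟨c, hc⟩ := hC k hk0 hkN
    calc P ^ (j + 1) ∣ X ^ (j * k) * P ^ (N - k) * P := by
          rw [pow_succ]; exact mul_dvd_mul_right (pow_dvd_pow_mul_pow_sub hX hj.le hkN.le) P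
      _ ∣ _ := ⟨α ^ k * β ^ (N - k) * c, by rw [hc, pow_mul]; ring⟩

variable (B : Type*) [CommRing B] [Algebra A B]

theorem dvd_of_pow_dvd_pow_of_isIntegrallyClosedIn {P y : A} [IsLocalization.Away P B]
    [IsIntegrallyClosedIn A B] {N : ℕ} (hN : N ≠ 0) (h : P ^ N ∣ y ^ N) : P ∣ y := by
  obtain ⟨a, ha⟩ := h
  have hinv := IsLocalization.Away.mul_invSelf (S := B) P
  set q := algebraMap A B y * IsLocalization.Away.invSelf P
  have hq : q ^ N = algebraMap A B a := by
    calc q ^ N = algebraMap A B (y ^ N) * IsLocalization.Away.invSelf P ^ N := by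
          rw [mul_pow, map_pow]
      _ = algebraMap A B a * (algebraMap A B P * IsLocalization.Away.invSelf P) ^ N := by
          rw [ha, map_mul, map_pow]; ring
      _ = algebraMap A B a := by rw [hinv, one_pow, mul_one]
  have hint : IsIntegral A q :=
    ⟨X ^ N - C a, monic_X_pow_sub_C a hN, by rw [eval₂_sub, eval₂_X_pow, eval₂_C, hq, sub_self]⟩
  obtain ⟨c, hc⟩ := IsIntegrallyClosedIn.algebraMap_eq_of_integral hint
  refine ⟨c, IsIntegralClosure.algebraMap_injective A A B ?_⟩
  rw [map_mul, hc]
  linear_combination (-algebraMap A B y) * hinv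

theorem mem_span_pair_of_dvd_pow {P X u w : A} (hP : P ∈ A⁰) [IsLocalization.Away P B]
    [IsIntegrallyClosedIn A B] {N : ℕ} (hN : N ≠ 0) (hX : X ^ N = P * u) (hu : P ∣ u - 1)
    (hw : P ∣ w ^ N) : w ∈ span {X, P} := by
  obtain ⟨M, rfl⟩ : ∃ M, N = M + 1 := ⟨N - 1, by omega⟩
  obtain ⟨a, ha⟩ := hw
  have hpow : P ^ (M + 1) ∣ (w * X ^ M) ^ (M + 1) :=
    ⟨a * u ^ M, by rw [mul_pow, ← pow_mul, mul_comm M, pow_mul, ha, hX]; ring⟩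
  obtain ⟨c, hc⟩ := dvd_of_pow_dvd_pow_of_isIntegrallyClosedIn B M.succ_ne_zero hpow
  have hwu : w * u = c * X := (isRegular_iff_mem_nonZeroDivisors.mpr hP).left <| by
    linear_combination (-w) * hX + X * hc
  obtain ⟨t, ht⟩ := hu
  exact mem_span_pair.mpr ⟨c, -(w * t), by linear_combination -hwu + w * ht⟩

theorem mem_span_pair_pow_succ {P X u z : A} (hP : P ∈ A⁰) [IsLocalization.Away P B]
    [IsIntegrallyClosedIn A B] {N j : ℕ} (hX : X ^ N = P * u) (hu : P ∣ u - 1)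
    (hC : ∀ k, 0 < k → k < N → P ∣ (N.choose k : A)) (hj : j < N)
    (hz : z ∈ span {X ^ j, P}) (hzN : P ^ (j + 1) ∣ z ^ N) : z ∈ span {X ^ (j + 1), P} := by
  obtain ⟨α, β, rfl⟩ := mem_span_pair.mp hz
  have hαX : P ^ j * P ∣ P ^ j * (α ^ N * u ^ j) := by
    have h := (dvd_sub_right hzN).mp (pow_succ_dvd_add_pow_sub_pow hX hC hj α β)
    rwa [mul_pow, ← pow_mul, mul_comm j, pow_mul, hX, pow_succ, mul_pow, mul_left_comm] at h
  have hα : P ∣ α ^ N := by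
    have hαu := ((isRegular_iff_mem_nonZeroDivisors.mpr hP).left.pow j).dvd_cancel_left.mp hαX
    have hu' : P ∣ α ^ N * (u ^ j - 1) := (hu.trans (sub_one_dvd_pow_sub_one u j)).mul_left _
    simpa [mul_sub] using dvd_sub hαu hu'
  obtain ⟨γ, δ, hγ⟩ := mem_span_pair.mp (mem_span_pair_of_dvd_pow B hP (by omega) hX hu hα)
  exact mem_span_pair.mpr ⟨γ, δ * X ^ j + β, by linear_combination X ^ j * hγ⟩

theorem pow_mem_span_pow_iff_mem_span_pair {P X u : A} (hP : P ∈ A⁰) [IsLocalization.Away P B]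
    [IsIntegrallyClosedIn A B] {N m : ℕ} (hX : X ^ N = P * u) (hu : P ∣ u - 1)
    (hC : ∀ k, 0 < k → k < N → P ∣ (N.choose k : A)) (hm : m ≤ N) (z : A) :
    z ^ N ∈ span {P ^ m} ↔ z ∈ span {X ^ m, P} := by
  rw [mem_span_singleton]
  refine ⟨fun hz => ?_, pow_dvd_pow_of_mem_span_pair hX hm⟩
  suffices ∀ j ≤ m, z ∈ span {X ^ j, P} from this m le_rfl
  intro j hj
  induction j with
  | zero => exact mem_span_pair.mpr ⟨z, 0, by simp⟩
  | succ j ih =>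
    exact mem_span_pair_pow_succ B hP hX hu hC (by omega) (ih (by omega))
      ((pow_dvd_pow P hj).trans hz)

end

theorem pow_pow_sub_mem_span_sq {A : Type*} [CommRing A] {p : ℕ} (x : ℕ → A)
    (hx1 : x 1 ^ p - (p : A) ∈ span {(p : A) ^ 2})
    (hxn : ∀ n : ℕ, 1 ≤ n → x (n + 1) ^ p - x n ∈ span {(p : A)}) (n : ℕ) (hn : 1 ≤ n) :
    x n ^ p ^ n - (p : A) ∈ span {(p : A) ^ 2} := by
  induction n, hn using Nat.le_induction with
  | base => simpa using hx1
  | succ n hn ih =>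
    have hstep : (p : A) ^ (n + 1) ∣ (x (n + 1) ^ p) ^ p ^ n - x n ^ p ^ n :=
      dvd_sub_pow_of_dvd_sub (mem_span_singleton.mp (hxn n hn)) n
    have hsq := mem_span_singleton.mpr ((pow_dvd_pow (p : A) (by omega : 2 ≤ n + 1)).trans hstep)
    rw [pow_succ' p n, pow_mul, ← sub_add_sub_cancel _ (x n ^ p ^ n)]
    exact add_mem hsq ih

theorem stmt4_general (p : ℕ) [Fact p.Prime] (A : Type*) [CommRing A]
    (htf : ∀ a : A, (p : A) * a = 0 → a = 0)
    (hic : ∀ y : Localization.Away (p : A), IsIntegral A y →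
      ∃ a : A, algebraMap A (Localization.Away (p : A)) a = y)
    (x : ℕ → A)
    (hx1 : x 1 ^ p - (p : A) ∈ Ideal.span {(p : A) ^ 2})
    (hxn : ∀ n : ℕ, 1 ≤ n → x (n + 1) ^ p - x n ∈ Ideal.span {(p : A)}) :
    ∀ n : ℕ, 1 ≤ n → ∀ m : ℕ, 1 ≤ m → m ≤ p ^ n →
      ∀ z : A, z ^ p ^ n ∈ Ideal.span {(p : A) ^ m} ↔
        z ∈ Ideal.span {x n ^ m, (p : A)} := by
  intro n hn m _ hm z
  have hP : (p : A) ∈ A⁰ := mem_nonZeroDivisors_iff_left.mpr htf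
  have : IsIntegrallyClosedIn A (Localization.Away (p : A)) := isIntegrallyClosedIn_iff.mpr
    ⟨IsLocalization.injective _ (Submonoid.powers_le.mpr hP), fun h => hic _ h⟩
  obtain ⟨s, hs⟩ := mem_span_singleton'.mp (pow_pow_sub_mem_span_sq x hx1 hxn n hn)
  have hC (k : ℕ) (hk0 : 0 < k) (hkN : k < p ^ n) : (p : A) ∣ ((p ^ n).choose k : A) := by
    exact_mod_cast Nat.cast_dvd_cast ((Fact.out : p.Prime).dvd_choose_pow hk0.ne' hkN.ne)
  exact pow_mem_span_pow_iff_mem_span_pair (Localization.Away (p : A)) hP (u := 1 + p * s)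
    (by linear_combination -hs) ⟨s, by ring⟩ hC hm z

/-- For `A` `p`-torsion-free, integrally closed in `A[1/p]`, and Witt-perfect at `p`,
with a sequence `x₁, x₂, …` as in Lemma `sequence of p-power roots`, the set
`{x ∈ A : x^{pⁿ} ∈ pᵐ A}` equals the ideal `(xₙᵐ, p)` for `n ≥ 1`, `1 ≤ m ≤ pⁿ`. -/
theorem stmt4 (p : ℕ) [Fact p.Prime] (A : Type*) [CommRing A]
    (htf : ∀ a : A, (p : A) * a = 0 → a = 0)
    (hic : ∀ y : Localization.Away (p : A), IsIntegral A y →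
      ∃ a : A, algebraMap A (Localization.Away (p : A)) a = y)
    (hwp : IsWittPerfect p A)
    (x : ℕ → A)
    (hx1 : x 1 ^ p - (p : A) ∈ Ideal.span {(p : A) ^ 2})
    (hxn : ∀ n : ℕ, 1 ≤ n → x (n + 1) ^ p - x n ∈ Ideal.span {(p : A)}) :
    ∀ n : ℕ, 1 ≤ n → ∀ m : ℕ, 1 ≤ m → m ≤ p ^ n →
      ∀ z : A, z ^ p ^ n ∈ Ideal.span {(p : A) ^ m} ↔
        z ∈ Ideal.span {x n ^ m, (p : A)} :=
  stmt4_general p A htf hic x hx1 hxn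
end

section
/- Let A be a p-torsion-free ring integrally closed in A[1/p], and let I be the nilradical of A. Then I·A[1/p] = I, I is also the nilradical of A[1/p], the natural map A[1/p]/I → (A/I)[1/p] is bijective, and A/I is p-torsion-free and integrally closed in (A/I)[1/p]. -/
/-!
Since `p` is a non-zero-divisor, `A → A[1/p]` is injective, and a nilpotent element of `A[1/p]`
is integral over `A`, hence lies in `A`; so `I·A[1/p]` is the nilradical of `A[1/p]` and comes
from `I`. Localization is exact, so `A[1/p] → (A/I)[1/p]` is onto with kernel `I·A[1/p]`.
An element `y` of `(A/I)[1/p]` integral over `A/I` lifts to some `z ∈ A[1/p]`; lifting a monic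
equation of `y` gives a monic `Q` over `A` with `Q(z)` in the kernel, i.e. nilpotent, so `z` is a
root of a monic power `Qⁿ`, hence integral over `A` and thus in `A`.
-/

open Polynomial

section Nilradical

variable {A : Type*} [CommRing A]

theorem mem_nilradical_of_mul_left_mem {s a : A} (hs : s ∈ nonZeroDivisors A)
    (h : s * a ∈ nilradical A) : a ∈ nilradical A := by
  obtain ⟨n, hn⟩ := h
  rw [mul_pow] at hn
  exact ⟨n, (mul_left_mem_nonZeroDivisors_eq_zero_iff (pow_mem hs n)).mp hn⟩

theorem Ideal.Quotient.mk_nilradical_mem_nonZeroDivisors {s : A} (hs : s ∈ nonZeroDivisors A) :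
    Ideal.Quotient.mk (nilradical A) s ∈ nonZeroDivisors (A ⧸ nilradical A) := by
  refine mem_nonZeroDivisors_iff_left.mpr fun b hb => ?_
  obtain ⟨a, rfl⟩ := Ideal.Quotient.mk_surjective b
  rw [← map_mul, Ideal.Quotient.eq_zero_iff_mem] at hb
  exact Ideal.Quotient.eq_zero_iff_mem.mpr (mem_nilradical_of_mul_left_mem hs hb)

end Nilradical

section IntegrallyClosed

variable {A B : Type*} [CommRing A] [CommRing B] [Algebra A B]

theorem exists_algebraMap_eq_of_isIntegral_of_algEquiv {C : Type*} [CommRing C] [Algebra A C]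
    (e : B ≃ₐ[A] C) (hic : ∀ y : B, IsIntegral A y → ∃ a : A, algebraMap A B a = y)
    (y : C) (hy : IsIntegral A y) : ∃ a : A, algebraMap A C a = y := by
  obtain ⟨a, ha⟩ := hic (e.symm y) (hy.map e.symm)
  exact ⟨a, by rw [← e.commutes, ha, e.apply_symm_apply]⟩

variable (hinj : Function.Injective (algebraMap A B))
  (hic : ∀ y : B, IsIntegral A y → ∃ a : A, algebraMap A B a = y)
include hinj hic

theorem exists_mem_nilradical_of_isNilpotent {y : B} (hy : IsNilpotent y) :
    ∃ x ∈ nilradical A, algebraMap A B x = y := by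
  obtain ⟨n, hn⟩ := hy
  obtain ⟨a, rfl⟩ := hic _ ⟨X ^ n, monic_X_pow n, by simpa using hn⟩
  exact ⟨a, ⟨n, hinj (by rw [map_pow, hn, map_zero])⟩, rfl⟩

theorem map_nilradical_eq_nilradical :
    Ideal.map (algebraMap A B) (nilradical A) = nilradical B := by
  refine le_antisymm (Ideal.map_le_iff_le_comap.mpr fun x hx => IsNilpotent.map hx _) fun y hy => ?_
  obtain ⟨x, hx, rfl⟩ := exists_mem_nilradical_of_isNilpotent hinj hic hy
  exact Ideal.mem_map_of_mem _ hx

end IntegrallyClosed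

theorem IsIntegral.of_map_of_ker_le_nilradical {A A' B C : Type*} [CommRing A] [CommRing A']
    [CommRing B] [CommRing C] [Algebra A B] [Algebra A' C] {π : A →+* A'}
    (hπ : Function.Surjective π) {g : B →+* C}
    (hg : g.comp (algebraMap A B) = (algebraMap A' C).comp π)
    (hker : RingHom.ker g ≤ nilradical B) {z : B} (hz : IsIntegral A' (g z)) :
    IsIntegral A z := by
  obtain ⟨P, hPm, hP⟩ := hz
  obtain ⟨Q, hQP, -, hQm⟩ := lifts_and_natDegree_eq_and_monic (mem_lifts_of_surjective hπ P) hPm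
  have hQz : aeval z Q ∈ RingHom.ker g := by
    rw [RingHom.mem_ker, aeval_def, hom_eval₂, hg, ← eval₂_map, hQP, hP]
  obtain ⟨n, hn⟩ := hker hQz
  exact ⟨Q ^ n, hQm.pow n, by rw [eval₂_pow, ← aeval_def, hn]⟩

section Localization

variable {A B Ap Bp : Type*} [CommRing A] [CommRing B] [CommRing Ap] [CommRing Bp]
  [Algebra A Ap] [Algebra B Bp] {M : Submonoid A} {T : Submonoid B}
  [IsLocalization M Ap] [IsLocalization T Bp] {π : A →+* B} {f : Ap →+* Bp}

theorem IsLocalization.eq_map_of_comp_eq (hT : M.map π = T)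
    (hf : f.comp (algebraMap A Ap) = (algebraMap B Bp).comp π) :
    f = IsLocalization.map Bp π (hT.symm ▸ M.le_comap_map) :=
  IsLocalization.ringHom_ext M (hf.trans (IsLocalization.map_comp _).symm)

theorem IsLocalization.surjective_of_comp_eq (hπ : Function.Surjective π) (hT : M.map π = T)
    (hf : f.comp (algebraMap A Ap) = (algebraMap B Bp).comp π) : Function.Surjective f := by
  subst hT
  rw [IsLocalization.eq_map_of_comp_eq (T := M.map π) rfl hf]
  exact IsLocalization.map_surjective_of_surjective M Ap Bp hπ

theorem IsLocalization.ker_eq_of_comp_eq (hT : M.map π = T)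
    (hf : f.comp (algebraMap A Ap) = (algebraMap B Bp).comp π) :
    RingHom.ker f = (RingHom.ker π).map (algebraMap A Ap) := by
  rw [IsLocalization.eq_map_of_comp_eq hT hf, IsLocalization.ker_map _ π hT]

end Localization

theorem stmt6_general (p : ℕ) (A : Type*) [CommRing A]
    (htf : ∀ a : A, (p : A) * a = 0 → a = 0)
    (hic : ∀ y : Localization.Away (p : A), IsIntegral A y →
      ∃ a : A, algebraMap A (Localization.Away (p : A)) a = y) :
    -- notation
    ∀ (Ap : Type _) (_ : CommRing Ap) (_ : Algebra A Ap) (_ : IsLocalization.Away (p : A) Ap)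
      (Bp : Type _) (_ : CommRing Bp) (_ : Algebra (A ⧸ nilradical A) Bp)
      (_ : IsLocalization.Away ((p : A ⧸ nilradical A)) Bp)
      (f : Ap →+* Bp)
      (hf : ∀ a : A, f (algebraMap A Ap a) =
        algebraMap (A ⧸ nilradical A) Bp (Ideal.Quotient.mk (nilradical A) a)),
      -- (1) `I·A_p = I`: every element of the ideal generated by `I` in `A_p` comes from `I`
      (∀ y ∈ Ideal.map (algebraMap A Ap) (nilradical A),
        ∃ x ∈ nilradical A, algebraMap A Ap x = y) ∧
      -- (2) `I·A_p` is the nilradical of `A_p`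
      Ideal.map (algebraMap A Ap) (nilradical A) = nilradical Ap ∧
      -- (3) the natural map `A_p/I·A_p → (A/I)_p` is bijective, i.e. `f` is surjective with
      -- kernel exactly `I·A_p`
      Function.Surjective f ∧
      (∀ y : Ap, f y = 0 ↔ y ∈ Ideal.map (algebraMap A Ap) (nilradical A)) ∧
      -- (4) `A/I` is `p`-torsion-free and integrally closed in `(A/I)_p`
      (∀ a : A ⧸ nilradical A, (p : A ⧸ nilradical A) * a = 0 → a = 0) ∧
      (∀ y : Bp, IsIntegral (A ⧸ nilradical A) y →
        ∃ a : A ⧸ nilradical A, algebraMap (A ⧸ nilradical A) Bp a = y) := by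
  intro Ap _ _ _ Bp _ _ _ f hf
  have hp : (p : A) ∈ nonZeroDivisors A := mem_nonZeroDivisors_iff_left.mpr htf
  have hinj : Function.Injective (algebraMap A Ap) :=
    IsLocalization.injective Ap (Submonoid.powers_le.mpr hp)
  have hicAp := exists_algebraMap_eq_of_isIntegral_of_algEquiv
    (IsLocalization.algEquiv (Submonoid.powers (p : A)) (Localization.Away (p : A)) Ap) hic
  have hnil := map_nilradical_eq_nilradical hinj hicAp
  have hT : (Submonoid.powers (p : A)).map (Ideal.Quotient.mk (nilradical A)) =
      Submonoid.powers (p : A ⧸ nilradical A) := by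
    rw [Submonoid.map_powers, map_natCast]
  have hker := IsLocalization.ker_eq_of_comp_eq hT (RingHom.ext hf)
  rw [Ideal.mk_ker] at hker
  have hsurj := IsLocalization.surjective_of_comp_eq Ideal.Quotient.mk_surjective hT (RingHom.ext hf)
  refine ⟨fun y hy => exists_mem_nilradical_of_isNilpotent hinj hicAp (hnil.le hy), hnil, hsurj,
    fun y => by rw [← RingHom.mem_ker, hker], ?_, fun y hy => ?_⟩
  · simpa using mem_nonZeroDivisors_iff_left.mp (Ideal.Quotient.mk_nilradical_mem_nonZeroDivisors hp)
  · obtain ⟨z, rfl⟩ := hsurj y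
    obtain ⟨a, rfl⟩ := hicAp z (IsIntegral.of_map_of_ker_le_nilradical
      Ideal.Quotient.mk_surjective (RingHom.ext hf) (hker.trans_le hnil.le) hy)
    exact ⟨_, (hf a).symm⟩

/-- Let `A` be `p`-torsion-free and integrally closed in `A_p := A[1/p]`, and let `I` be the
nilradical of `A`. Then `I·A_p` equals the image of `I` (so "`I·A_p = I`"), it is the
nilradical of `A_p`, the natural map `A_p/I·A_p → (A/I)_p` is bijective, and `A/I` is
`p`-torsion-free and integrally closed in `(A/I)_p`. -/
theorem stmt6 (p : ℕ) [Fact p.Prime] (A : Type*) [CommRing A]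
    (htf : ∀ a : A, (p : A) * a = 0 → a = 0)
    (hic : ∀ y : Localization.Away (p : A), IsIntegral A y →
      ∃ a : A, algebraMap A (Localization.Away (p : A)) a = y) :
    -- notation
    ∀ (Ap : Type _) (_ : CommRing Ap) (_ : Algebra A Ap) (_ : IsLocalization.Away (p : A) Ap)
      (Bp : Type _) (_ : CommRing Bp) (_ : Algebra (A ⧸ nilradical A) Bp)
      (_ : IsLocalization.Away ((p : A ⧸ nilradical A)) Bp)
      (f : Ap →+* Bp)
      (hf : ∀ a : A, f (algebraMap A Ap a) =
        algebraMap (A ⧸ nilradical A) Bp (Ideal.Quotient.mk (nilradical A) a)),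
      -- (1) `I·A_p = I`: every element of the ideal generated by `I` in `A_p` comes from `I`
      (∀ y ∈ Ideal.map (algebraMap A Ap) (nilradical A),
        ∃ x ∈ nilradical A, algebraMap A Ap x = y) ∧
      -- (2) `I·A_p` is the nilradical of `A_p`
      Ideal.map (algebraMap A Ap) (nilradical A) = nilradical Ap ∧
      -- (3) the natural map `A_p/I·A_p → (A/I)_p` is bijective, i.e. `f` is surjective with
      -- kernel exactly `I·A_p`
      Function.Surjective f ∧
      (∀ y : Ap, f y = 0 ↔ y ∈ Ideal.map (algebraMap A Ap) (nilradical A)) ∧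
      -- (4) `A/I` is `p`-torsion-free and integrally closed in `(A/I)_p`
      (∀ a : A ⧸ nilradical A, (p : A ⧸ nilradical A) * a = 0 → a = 0) ∧
      (∀ y : Bp, IsIntegral (A ⧸ nilradical A) y →
        ∃ a : A ⧸ nilradical A, algebraMap (A ⧸ nilradical A) Bp a = y) :=
  stmt6_general p A htf hic
end

section
/- Let A be a p-torsion-free ring which is Witt-perfect at p, and let B be the integral closure of A in A[1/p]. If B/A is killed by every ideal I of A satisfying (p^m) ⊆ I and I^n ⊆ (p) for some positive integers m, n, then B is also Witt-perfect at p. -/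
/-!
Call `x ∈ W(R)` `k`-shiftable to level `n` if its first `n` ghost components are the ghost
components `k, …, k + n - 1` of some Witt vector; these `x` form a subring `S(k, n)`.
Witt-perfectness means `S(1, n) = W(R)` for all `n` (the converse needs `p` to be a
non-zero-divisor), and then `S(k, n) = W(R)` for all `k`.

For `B` we go the other way. `S(k, n)` always contains `p^k W(B)` (via `V^k`) and the Teichmüller
lifts of `p^k`-th powers, and it contains `V(1)`, imported from `A`. By induction on `n` it then
contains `V(W(B))`, so `S(k, n + 1) = W(B)` as soon as every element of `B` is a `p`-th power
mod `p`. That comes from `A`: Witt-perfectness gives `θ, v ∈ A` with `θ^p = -p v` and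
`v^p ≡ 1 mod p`, and makes every element of `A` a `p`-th power mod `p`, hence every `p a` a
`p`-th power mod `p²`. For `b ∈ B`, `a = p b` lies in `A`; writing `p v² a = y^p + p² z`, the
element `c = y θ^(2(p-1)) / p²` satisfies `c^p = v^(2p) b - z v^(2(p-1))`, so `c` is integral
and `b ≡ c^p + s^p ≡ (c + s)^p mod p` for a `p`-th root `s` of `z v^(2(p-1))` mod `p`.
-/

open WittVector

theorem exists_dvd_sub_pow_pow {T : Type*} [CommRing T] {a : T} {q : ℕ}
    (h : ∀ b : T, ∃ c, a ∣ b - c ^ q) (k : ℕ) (b : T) : ∃ c, a ∣ b - c ^ q ^ k := by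
  induction k with
  | zero => exact ⟨b, by simp⟩
  | succ k ih =>
    obtain ⟨c, hc⟩ := ih
    obtain ⟨d, hd⟩ := h c
    refine ⟨d, ?_⟩
    have := hd.trans (sub_dvd_pow_sub_pow c (d ^ q) (q ^ k))
    rw [← pow_mul, ← pow_succ'] at this
    simpa using dvd_add hc this

theorem Subring.eq_top_of_dvd_sub_mem {T : Type*} [CommRing T] {S : Subring T} {a : T}
    (ha : a ∈ S) (hmod : ∀ b, ∃ c ∈ S, a ∣ b - c) {k : ℕ}
    (hpow : ∀ b, a ^ k * b ∈ S) :
    S = ⊤ := by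
  have approx : ∀ i b, ∃ c ∈ S, a ^ i ∣ b - c := by
    intro i
    induction i with
    | zero => exact fun b => ⟨0, S.zero_mem, by simp⟩
    | succ i ih =>
      intro b
      obtain ⟨c, hcS, d, hd⟩ := ih b
      obtain ⟨c', hc'S, e, he⟩ := hmod d
      refine ⟨c + a ^ i * c', S.add_mem hcS (S.mul_mem (S.pow_mem ha i) hc'S), e, ?_⟩
      linear_combination hd + a ^ i * he
  refine eq_top_iff.mpr fun b _ => ?_
  obtain ⟨c, hcS, d, hd⟩ := approx k b
  simpa [sub_eq_iff_eq_add.mp hd] using S.add_mem (hpow d) hcS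

theorem exists_sq_dvd_mul_sub_pow {T : Type*} [CommRing T] {p : ℕ} (hp : p ≠ 0)
    (hroot : ∀ x : T, ∃ s, (p : T) ∣ x - s ^ p) {θ v : T} (hθ : θ ^ p = -(p * v))
    (hv : (p : T) ∣ v ^ p - 1) (x : T) : ∃ y, (p : T) ^ 2 ∣ p * x - y ^ p := by
  obtain ⟨q, hq⟩ : ∃ q, p = q + 1 := ⟨p - 1, by omega⟩
  obtain ⟨w, t, ht⟩ := hroot (-(v ^ q * x))
  obtain ⟨m, hm⟩ := hv
  refine ⟨θ * w, -(m * x + v * t), ?_⟩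
  have hvq : v * v ^ q = v ^ p := by rw [hq, pow_succ']
  linear_combination (-w ^ p) * hθ + (-(p * v)) * ht + (-(p * x)) * hm + (-(p * x)) * hvq

namespace WittVector

variable {p : ℕ} [Fact p.Prime] {R S : Type*} [CommRing R] [CommRing S]

local notation "𝕎" => WittVector p

theorem ghostComponent_map (f : R →+* S) (n : ℕ) (x : 𝕎 R) :
    ghostComponent n (map f x) = f (ghostComponent n x) := by
  simp [ghostComponent_apply, aeval_wittPolynomial, map_coeff]

theorem ghostComponent_add_iterate_verschiebung (x : 𝕎 R) (n k : ℕ) :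
    ghostComponent (n + k) (verschiebung^[k] x) = (p : R) ^ k * ghostComponent n x := by
  induction k with
  | zero => simp
  | succ k ih =>
    rw [Function.iterate_succ_apply', ← add_assoc, ghostComponent_verschiebung, ih]
    ring

theorem ghostComponent_one_eq (x : 𝕎 R) :
    ghostComponent 1 x = x.coeff 0 ^ p + p * x.coeff 1 := by
  simp [ghostComponent_apply, add_comm]

theorem ghostComponent_two_eq (x : 𝕎 R) :
    ghostComponent 2 x = x.coeff 0 ^ p ^ 2 + p * x.coeff 1 ^ p + p ^ 2 * x.coeff 2 := by
  simp [ghostComponent_apply, aeval_wittPolynomial, Finset.sum_range_succ]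

theorem ghostComponent_eq_of_coeff_eq {x y : 𝕎 R} {n : ℕ}
    (h : ∀ i ≤ n, x.coeff i = y.coeff i) :
    ghostComponent n x = ghostComponent n y := by
  simp only [ghostComponent_apply, aeval_wittPolynomial]
  exact Finset.sum_congr rfl fun i hi => by rw [h i (Nat.lt_succ_iff.mp (Finset.mem_range.mp hi))]

theorem coeff_eq_of_ghostComponent_eq (hreg : IsLeftRegular (p : R)) {x y : 𝕎 R} {n : ℕ}
    (h : ∀ j ≤ n, ghostComponent j x = ghostComponent j y) : x.coeff n = y.coeff n := by
  induction n using Nat.strong_induction_on with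
  | _ n ih =>
    have hlow : ∀ i < n, x.coeff i = y.coeff i :=
      fun i hi => ih i hi fun j hj => h j (hj.trans hi.le)
    have hn := h n le_rfl
    simp only [ghostComponent_apply, aeval_wittPolynomial, Finset.sum_range_succ, Nat.sub_self,
      pow_zero, pow_one] at hn
    rw [Finset.sum_congr rfl fun i hi => by rw [hlow i (Finset.mem_range.mp hi)]] at hn
    exact hreg.pow n (add_left_cancel hn)

theorem ghostComponent_eq_of_truncate_eq {x y : 𝕎 R} {n : ℕ} (h : truncate n x = truncate n y)
    {j : ℕ} (hj : j < n) : ghostComponent j x = ghostComponent j y :=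
  ghostComponent_eq_of_coeff_eq fun i hi => by
    simpa [coeff_truncate] using congrArg (TruncatedWittVector.coeff ⟨i, by omega⟩) h

theorem truncate_eq_of_ghostComponent_eq (hreg : IsLeftRegular (p : R)) {x y : 𝕎 R} {n : ℕ}
    (h : ∀ j < n, ghostComponent j x = ghostComponent j y) : truncate n x = truncate n y := by
  ext i
  simp only [coeff_truncate]
  exact coeff_eq_of_ghostComponent_eq hreg fun j hj => h j (by omega)

variable (p R) in
/-- The Witt vectors agreeing with some `F^k z` in their first `n` ghost components
(as `w_j (F^k z) = w_(j+k) z`). -/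
def ghostShiftSubring (k n : ℕ) : Subring (𝕎 R) where
  carrier := {x | ∃ z : 𝕎 R, ∀ j < n, ghostComponent (j + k) z = ghostComponent j x}
  mul_mem' := by
    rintro x y ⟨z, hz⟩ ⟨w, hw⟩
    exact ⟨z * w, fun j hj => by simp only [map_mul, hz j hj, hw j hj]⟩
  one_mem' := ⟨1, by simp⟩
  add_mem' := by
    rintro x y ⟨z, hz⟩ ⟨w, hw⟩
    exact ⟨z + w, fun j hj => by simp only [map_add, hz j hj, hw j hj]⟩
  zero_mem' := ⟨0, by simp⟩
  neg_mem' := by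
    rintro x ⟨z, hz⟩
    exact ⟨-z, fun j hj => by simp only [map_neg, hz j hj]⟩

theorem mem_ghostShiftSubring {k n : ℕ} {x : 𝕎 R} :
    x ∈ ghostShiftSubring p R k n ↔
      ∃ z : 𝕎 R, ∀ j < n, ghostComponent (j + k) z = ghostComponent j x :=
  Iff.rfl

theorem ghostShiftSubring_zero_left (n : ℕ) : ghostShiftSubring p R 0 n = ⊤ :=
  eq_top_iff.mpr fun x _ => ⟨x, fun _ _ => rfl⟩

theorem ghostShiftSubring_zero_right (k : ℕ) : ghostShiftSubring p R k 0 = ⊤ :=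
  eq_top_iff.mpr fun _ _ => ⟨0, fun _ hj => absurd hj (Nat.not_lt_zero _)⟩

theorem ghostShiftSubring_succ_left_eq_top {k n : ℕ} (hk : ghostShiftSubring p R k n = ⊤)
    (h₁ : ghostShiftSubring p R 1 (n + k) = ⊤) : ghostShiftSubring p R (k + 1) n = ⊤ := by
  refine eq_top_iff.mpr fun x _ => ?_
  obtain ⟨y, hy⟩ := mem_ghostShiftSubring.mp (hk ▸ Subring.mem_top x)
  obtain ⟨z, hz⟩ := mem_ghostShiftSubring.mp (h₁ ▸ Subring.mem_top y)
  exact ⟨z, fun j hj => by rw [← add_assoc, hz (j + k) (by omega), hy j hj]⟩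

theorem map_mem_ghostShiftSubring (f : R →+* S) {k n : ℕ} {x : 𝕎 R}
    (hx : x ∈ ghostShiftSubring p R k n) : map f x ∈ ghostShiftSubring p S k n := by
  obtain ⟨z, hz⟩ := hx
  exact ⟨map f z, fun j hj => by rw [ghostComponent_map, ghostComponent_map, hz j hj]⟩

theorem pow_mul_mem_ghostShiftSubring (k n : ℕ) (x : 𝕎 R) :
    (p : 𝕎 R) ^ k * x ∈ ghostShiftSubring p R k n :=
  ⟨verschiebung^[k] x, fun j _ => by simp [ghostComponent_add_iterate_verschiebung]⟩

theorem teichmuller_pow_mem_ghostShiftSubring (k n : ℕ) (r : R) :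
    teichmuller p (r ^ p ^ k) ∈ ghostShiftSubring p R k n :=
  ⟨teichmuller p r, fun j _ => by simp only [ghostComponent_teichmuller, ← pow_mul, ← pow_add,
    add_comm]⟩

theorem verschiebung_mem_ghostShiftSubring {k n : ℕ}
    (h₁ : verschiebung 1 ∈ ghostShiftSubring p R k (n + 1)) {x : 𝕎 R}
    (hx : x ∈ ghostShiftSubring p R (k + 1) n) :
    verschiebung x ∈ ghostShiftSubring p R k (n + 1) := by
  obtain ⟨u, hu⟩ := h₁
  obtain ⟨z, hz⟩ := hx
  refine ⟨u * z, fun j hj => ?_⟩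
  rw [map_mul, hu j hj]
  rcases j with _ | j
  · simp only [ghostComponent_zero_verschiebung, zero_mul]
  · rw [ghostComponent_verschiebung, ghostComponent_verschiebung, map_one, mul_one,
      add_right_comm, add_assoc, hz j (by omega)]

theorem subring_eq_top_of_verschiebung_mem {S : Subring (𝕎 R)}
    (hV : ∀ y, verschiebung y ∈ S) (hc : S.map constantCoeff = ⊤) : S = ⊤ := by
  refine eq_top_iff.mpr fun x _ => ?_
  obtain ⟨y, hyS, hy⟩ := Subring.mem_map.mp (hc ▸ Subring.mem_top (x.coeff 0))
  have hxy : x - y = verschiebung ((x - y).shift 1) :=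
    eq_iterate_verschiebung (n := 1) fun i hi => by
      simp [Nat.lt_one_iff.mp hi, ← constantCoeff_apply, hy]
  simpa using S.add_mem hyS (hxy ▸ hV _ : x - y ∈ S)

theorem ghostShiftSubring_eq_top_of_verschiebung_one_mem
    (hroot : ∀ b : R, ∃ c, (p : R) ∣ b - c ^ p)
    (h₁ : ∀ k n, verschiebung 1 ∈ ghostShiftSubring p R k n) (n k : ℕ) :
    ghostShiftSubring p R k n = ⊤ := by
  induction n generalizing k with
  | zero => exact ghostShiftSubring_zero_right k
  | succ n ih =>
    refine subring_eq_top_of_verschiebung_mem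
      (fun y => verschiebung_mem_ghostShiftSubring (h₁ k (n + 1))
        (ih (k + 1) ▸ Subring.mem_top y))
      (Subring.eq_top_of_dvd_sub_mem (a := (p : R)) (k := k) ?_ (fun b => ?_) (fun b => ?_))
    · exact Subring.mem_map.mpr ⟨p, natCast_mem _ p, map_natCast _ p⟩
    · obtain ⟨c, hc⟩ := exists_dvd_sub_pow_pow hroot k b
      exact ⟨c ^ p ^ k, Subring.mem_map.mpr
        ⟨_, teichmuller_pow_mem_ghostShiftSubring (p := p) k (n + 1) c,
          teichmuller_coeff_zero p _⟩, hc⟩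
    · exact Subring.mem_map.mpr ⟨_, pow_mul_mem_ghostShiftSubring k (n + 1) (teichmuller p b), by
        rw [map_mul, map_pow, map_natCast, constantCoeff_apply, teichmuller_coeff_zero]⟩

end WittVector

namespace IsWittPerfect

variable {p : ℕ} [hp : Fact p.Prime] {R : Type*} [CommRing R]

theorem ghostShiftSubring_one_eq_top (h : IsWittPerfect p R) (n : ℕ) :
    ghostShiftSubring p R 1 n = ⊤ := by
  rcases n with _ | n
  · exact ghostShiftSubring_zero_right 1
  refine eq_top_iff.mpr fun x _ => ?_
  obtain ⟨y, hy⟩ := h n (truncate (n + 1) x)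
  exact ⟨y.out, fun j hj => by
    rw [← ghostComponent_frobenius, ghostComponent_eq_of_truncate_eq hy hj]⟩

theorem ghostShiftSubring_eq_top (h : IsWittPerfect p R) (k n : ℕ) :
    ghostShiftSubring p R k n = ⊤ := by
  induction k generalizing n with
  | zero => exact ghostShiftSubring_zero_left n
  | succ k ih => exact ghostShiftSubring_succ_left_eq_top (ih n) (h.ghostShiftSubring_one_eq_top _)

theorem of_ghostShiftSubring_eq_top (hreg : IsLeftRegular (p : R))
    (h : ∀ n, ghostShiftSubring p R 1 n = ⊤) : IsWittPerfect p R := by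
  intro n y
  obtain ⟨z, hz⟩ := mem_ghostShiftSubring.mp (h (n + 1) ▸ Subring.mem_top y.out)
  refine ⟨truncate (n + 2) z, ?_⟩
  have hout : truncate (n + 2) (truncate (n + 2) z).out = truncate (n + 2) z :=
    TruncatedWittVector.truncateFun_out _
  refine (truncate_eq_of_ghostComponent_eq hreg (y := y.out) fun j hj => ?_).trans
    (TruncatedWittVector.truncateFun_out y)
  rw [ghostComponent_frobenius, ghostComponent_eq_of_truncate_eq hout (by omega), hz j hj]

theorem of_verschiebung_one_mem (hreg : IsLeftRegular (p : R))
    (hroot : ∀ b : R, ∃ c, (p : R) ∣ b - c ^ p)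
    (h₁ : ∀ k n, verschiebung 1 ∈ ghostShiftSubring p R k n) : IsWittPerfect p R :=
  of_ghostShiftSubring_eq_top hreg fun n =>
    ghostShiftSubring_eq_top_of_verschiebung_one_mem hroot h₁ n 1

theorem exists_dvd_sub_pow (h : IsWittPerfect p R) (x : R) : ∃ s, (p : R) ∣ x - s ^ p := by
  obtain ⟨z, hz⟩ := mem_ghostShiftSubring.mp
    (h.ghostShiftSubring_eq_top 1 1 ▸ Subring.mem_top (teichmuller p x))
  have h₀ := hz 0 one_pos
  rw [zero_add, ghostComponent_one_eq, ghostComponent_teichmuller, pow_zero, pow_one] at h₀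
  exact ⟨z.coeff 0, z.coeff 1, by rw [← h₀]; ring⟩

theorem exists_pow_eq_neg_mul (h : IsWittPerfect p R) (hreg : IsLeftRegular (p : R)) :
    ∃ θ v : R, θ ^ p = -(p * v) ∧ (p : R) ∣ v ^ p - 1 := by
  obtain ⟨z, hz⟩ := mem_ghostShiftSubring.mp
    (h.ghostShiftSubring_eq_top 1 2 ▸ Subring.mem_top (verschiebung (1 : WittVector p R)))
  have h₀ := hz 0 (by norm_num)
  have h₁ := hz 1 (by norm_num)
  rw [zero_add, ghostComponent_one_eq, ghostComponent_zero_verschiebung] at h₀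
  rw [ghostComponent_two_eq, ghostComponent_verschiebung, map_one, mul_one] at h₁
  have hθ : z.coeff 0 ^ p = -(p * z.coeff 1) := by linear_combination h₀
  obtain ⟨q, hq⟩ : ∃ q, p = q + 2 := ⟨p - 2, by have := hp.out.two_le; omega⟩
  have hθp : z.coeff 0 ^ p ^ 2 = (-(p * z.coeff 1)) ^ q * (p * z.coeff 1) ^ 2 := by
    have hsplit : ∀ a : R, a ^ p = a ^ q * a ^ 2 := fun a => by rw [hq, pow_add]
    rw [sq p, pow_mul, hθ, hsplit, neg_sq]
  refine ⟨z.coeff 0, z.coeff 1, hθ, -((-(p * z.coeff 1)) ^ q * z.coeff 1 ^ 2 + z.coeff 2), ?_⟩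
  exact hreg (by linear_combination h₁ - hθp)

end IsWittPerfect

section IntegralClosure

variable {p : ℕ} [hp : Fact p.Prime] {A K : Type*} [CommRing A] [CommRing K] [Algebra A K]

theorem exists_mem_integralClosure_pow_eq (hu : IsUnit (p : K)) {θ v : A}
    (hθ : θ ^ p = -(p * v)) {b : K} (hb : b ∈ integralClosure A K) {a y z : A}
    (ha : algebraMap A K a = p * b) (hyz : p * (v ^ 2 * a) - y ^ p = p ^ 2 * z) :
    ∃ c ∈ integralClosure A K,
      c ^ p = algebraMap A K (v ^ (2 * p)) * b - algebraMap A K (z * v ^ (2 * (p - 1))) := by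
  set φ := algebraMap A K
  obtain ⟨π, hπ⟩ : ∃ π : K, (p : K) * π = 1 := ⟨_, hu.mul_val_inv⟩
  have hθK : φ θ ^ p = -(p * φ v) := by simpa using congrArg φ hθ
  have hyzK : p * (φ v ^ 2 * φ a) - φ y ^ p = p ^ 2 * φ z := by simpa using congrArg φ hyz
  obtain ⟨q, rfl⟩ : ∃ q, p = q + 1 := ⟨p - 1, by have := hp.out.pos; omega⟩
  -- `c = y θ^(2(p-1)) / p²`; the point is that `θ^(2p) = p² v²`
  set c := π ^ 2 * φ y * φ θ ^ (2 * q)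
  have hcp : c ^ (q + 1) = φ (v ^ (2 * (q + 1))) * b - φ (z * v ^ (2 * (q + 1 - 1))) := by
    have hθ2 : φ θ ^ ((q + 1) * (2 * q)) = ((q + 1 : ℕ) * φ v) ^ (2 * q) := by
      rw [pow_mul, hθK, (even_two_mul q).neg_pow]
    have hπ2 : ((q + 1 : ℕ) * π) ^ (2 * (q + 1)) = 1 := by rw [hπ, one_pow]
    refine (hu.pow (2 * (q + 1))).mul_left_cancel ?_
    simp only [map_pow, map_mul, Nat.add_sub_cancel]
    linear_combination (φ y ^ (q + 1) * φ θ ^ ((q + 1) * (2 * q))) * hπ2 + φ y ^ (q + 1) * hθ2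
      - ((q + 1 : ℕ) * φ v) ^ (2 * q) * hyzK
      + ((q + 1 : ℕ) : K) ^ (2 * q + 1) * φ v ^ (2 * q + 2) * ha
  have hcpB : c ^ (q + 1) ∈ integralClosure A K :=
    hcp ▸ sub_mem (mul_mem (Subalgebra.algebraMap_mem _ _) hb) (Subalgebra.algebraMap_mem _ _)
  exact ⟨c, IsIntegral.of_pow q.succ_pos hcpB, hcp⟩

theorem exists_dvd_sub_pow_of_mem_integralClosure (hu : IsUnit (p : K))
    (hroot : ∀ x : A, ∃ s, (p : A) ∣ x - s ^ p) {θ v : A} (hθ : θ ^ p = -(p * v))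
    (hv : (p : A) ∣ v ^ p - 1)
    (hB : ∀ b ∈ integralClosure A K, ∃ a : A, algebraMap A K a = p * b)
    (b : integralClosure A K) : ∃ c, (p : integralClosure A K) ∣ b - c ^ p := by
  set ψ := algebraMap A (integralClosure A K)
  obtain ⟨a, ha⟩ := hB b b.2
  obtain ⟨y, z, hyz⟩ := exists_sq_dvd_mul_sub_pow hp.out.ne_zero hroot hθ hv (v ^ 2 * a)
  obtain ⟨c, hc, hcp⟩ := exists_mem_integralClosure_pow_eq hu hθ b.2 ha hyz
  obtain ⟨s, hs⟩ := hroot (z * v ^ (2 * (p - 1)))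
  have hv2 : (p : A) ∣ v ^ (2 * p) - 1 := by
    simpa [← pow_mul'] using hv.trans (sub_dvd_pow_sub_pow (v ^ p) 1 2)
  obtain ⟨d₁, hd₁⟩ := map_dvd ψ hs
  obtain ⟨d₂, hd₂⟩ := map_dvd ψ hv2
  obtain ⟨r, hr⟩ := exists_add_pow_prime_eq hp.out (⟨c, hc⟩ : integralClosure A K) (ψ s)
  have hcpB : (⟨c, hc⟩ : integralClosure A K) ^ p =
      ψ (v ^ (2 * p)) * b - ψ (z * v ^ (2 * (p - 1))) :=
    Subtype.ext (by simpa [ψ] using hcp)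
  refine ⟨⟨c, hc⟩ + ψ s, d₁ - d₂ * b - ⟨c, hc⟩ * ψ s * r, ?_⟩
  simp only [map_sub, map_pow, map_natCast, map_mul, map_one] at hd₁ hd₂ hcpB
  linear_combination hd₁ - b * hd₂ - hr - hcpB

end IntegralClosure

/-- Let `A` be a `p`-torsion-free ring which is Witt-perfect at `p`, and let `B` be the
integral closure of `A` in `A[1/p]`. If `B/A` is killed by every `p`-ideal of `A`
(an ideal `I` with `(p^m) ⊆ I` and `Iⁿ ⊆ (p)` for some `m, n ≥ 1`), then `B` is also
Witt-perfect at `p`. -/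
theorem stmt9 (p : ℕ) [Fact p.Prime] (A : Type*) [CommRing A]
    (Ap : Type*) [CommRing Ap] [Algebra A Ap] [IsLocalization.Away (p : A) Ap]
    (htf : ∀ a : A, (p : A) * a = 0 → a = 0)
    (hwp : IsWittPerfect p A)
    (hkill : ∀ I : Ideal A,
      (∃ m : ℕ, 1 ≤ m ∧ Ideal.span {(p : A) ^ m} ≤ I) →
      (∃ n : ℕ, 1 ≤ n ∧ I ^ n ≤ Ideal.span {(p : A)}) →
      ∀ x ∈ I, ∀ b ∈ integralClosure A Ap,
        ∃ a : A, algebraMap A Ap a = algebraMap A Ap x * b) :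
    IsWittPerfect p (integralClosure A Ap) := by
  have hu : IsUnit (p : Ap) := by
    simpa using IsLocalization.Away.algebraMap_isUnit (S := Ap) (p : A)
  have hregB : IsLeftRegular (p : integralClosure A Ap) := fun x y h =>
    Subtype.ext (hu.mul_left_cancel (by simpa using congrArg Subtype.val h))
  obtain ⟨θ, v, hθ, hv⟩ := hwp.exists_pow_eq_neg_mul (isLeftRegular_of_non_zero_divisor _ htf)
  have hB : ∀ b ∈ integralClosure A Ap, ∃ a : A, algebraMap A Ap a = p * b := by
    simpa using hkill (Ideal.span {(p : A)}) ⟨1, le_rfl, by simp⟩ ⟨1, le_rfl, by simp⟩ p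
      (Ideal.mem_span_singleton_self _)
  refine IsWittPerfect.of_verschiebung_one_mem hregB
    (exists_dvd_sub_pow_of_mem_integralClosure hu hwp.exists_dvd_sub_pow hθ hv hB) fun k n => ?_
  have h₁ := map_mem_ghostShiftSubring (algebraMap A (integralClosure A Ap))
    (hwp.ghostShiftSubring_eq_top k n ▸ Subring.mem_top (verschiebung (1 : WittVector p A)))
  rwa [map_verschiebung, map_one] at h₁
end

section
/- Let A be a ring complete with respect to a nonarchimedean submultiplicative seminorm |·|. Then W_{p^n}(A) is complete with respect to the seminorm |x|_W = sup_{0≤j≤n} |x_{p^j}|^{1/p^j}. -/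
/-
Since the exponents `1 / pʲ` are positive, `|x|_W → 0` exactly when every Witt coordinate `x_j`
tends to `0`. Witt vector addition and subtraction are given coordinatewise by integer polynomials,
and for a nonarchimedean submultiplicative seminorm an integer polynomial is uniformly continuous
on bounded sets. A Cauchy sequence `s` is bounded (`s m = (s m - s N) + s N`), so writing
`s m = (s m - s k) + s k` shows that each coordinate sequence `(s m)_j` is Cauchy in `A`. Its limits
`a_j` form a Witt vector `a`, and the subtraction polynomials applied to `s m` and `a` show that
the coordinates of `s m - a` tend to `0`.
-/

open WittVector

/-- The Gauss norm `|x|_W = max_{0 ≤ j ≤ n} |x_{pʲ}|^{1/pʲ}` on `W_{pⁿ}(A)`. -/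
noncomputable def truncWittNorm (p : ℕ) [Fact p.Prime] {A : Type*} [CommRing A]
    (f : A → ℝ) (n : ℕ) (x : TruncatedWittVector p (n + 1) A) : ℝ :=
  ⨆ j : Fin (n + 1), f (x.coeff j) ^ ((1 : ℝ) / (p : ℝ) ^ (j : ℕ))

open Filter Topology MvPolynomial

theorem tendsto_nhds_zero_iff_of_nonneg {ι : Type*} {l : Filter ι} {u : ι → ℝ}
    (hu : ∀ t, 0 ≤ u t) : Tendsto u l (𝓝 0) ↔ ∀ ε > 0, ∀ᶠ t in l, u t < ε := by
  simp only [Metric.tendsto_nhds, Real.dist_0_eq_abs, abs_of_nonneg (hu _)]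

def SeqComplete {G : Type*} [Sub G] (f : G → ℝ) : Prop :=
  ∀ s : ℕ → G, Tendsto (fun q : ℕ × ℕ => f (s q.1 - s q.2)) (atTop ×ˢ atTop) (𝓝 0) →
    ∃ a, Tendsto (fun m => f (s m - a)) atTop (𝓝 0)

theorem seqComplete_iff {G : Type*} [Sub G] {f : G → ℝ} (hf : ∀ x, 0 ≤ f x) :
    SeqComplete f ↔ ∀ s : ℕ → G,
      (∀ ε : ℝ, 0 < ε → ∃ N : ℕ, ∀ m k : ℕ, N ≤ m → N ≤ k → f (s m - s k) < ε) →
      ∃ a : G, ∀ ε : ℝ, 0 < ε → ∃ N : ℕ, ∀ m : ℕ, N ≤ m → f (s m - a) < ε := by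
  simp_rw [SeqComplete, tendsto_nhds_zero_iff_of_nonneg fun _ => hf _, prod_atTop_atTop_eq,
    eventually_atTop_prod_self, eventually_atTop]

section truncWittNorm

variable {p : ℕ} [Fact p.Prime] {A : Type*} [CommRing A] {f : A → ℝ} {n : ℕ}

theorem truncWittNorm_nonneg (hf : ∀ x, 0 ≤ f x) (x : TruncatedWittVector p (n + 1) A) :
    0 ≤ truncWittNorm p f n x :=
  Real.iSup_nonneg fun _ => Real.rpow_nonneg (hf _) _

theorem tendsto_truncWittNorm_nhds_zero_iff (hf : ∀ x, 0 ≤ f x) {ι : Type*} {l : Filter ι}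
    {x : ι → TruncatedWittVector p (n + 1) A} :
    Tendsto (fun t => truncWittNorm p f n (x t)) l (𝓝 0) ↔
      ∀ j, Tendsto (fun t => f ((x t).coeff j)) l (𝓝 0) := by
  have hpow : ∀ j : Fin (n + 1), 0 < (p : ℝ) ^ (j : ℕ) := fun j =>
    pow_pos (Nat.cast_pos.2 (Fact.out : p.Prime).pos) _
  set g : ι → Fin (n + 1) → ℝ := fun t j => f ((x t).coeff j) ^ ((1 : ℝ) / (p : ℝ) ^ (j : ℕ))
  have hg : ∀ t j, 0 ≤ g t j := fun t j => Real.rpow_nonneg (hf _) _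
  have hterm : ∀ j, Tendsto (fun t => f ((x t).coeff j)) l (𝓝 0) ↔
      Tendsto (fun t => g t j) l (𝓝 0) := by
    intro j
    have hinv := inv_pos.2 (hpow j)
    refine ⟨fun h => ?_, fun h => ?_⟩
    · simpa [g, Real.zero_rpow hinv.ne'] using h.rpow_const (Or.inr hinv.le)
    · simpa [g, Real.rpow_inv_rpow (hf _) (hpow j).ne', Real.zero_rpow (hpow j).ne'] using
        h.rpow_const (p := (p : ℝ) ^ (j : ℕ)) (Or.inr (hpow j).le)
  simp only [hterm]
  change Tendsto (fun t => ⨆ j, g t j) l (𝓝 0) ↔ _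
  refine ⟨fun h j => ?_, fun h => ?_⟩
  · exact squeeze_zero (fun t => hg t j) (fun t => le_ciSup (Finite.bddAbove_range _) j) h
  · refine squeeze_zero (fun t => Real.iSup_nonneg (hg t))
      (fun t => ciSup_le fun j => Finset.single_le_sum (fun i _ => hg t i) (Finset.mem_univ j))
      (by simpa only [Finset.sum_const_zero] using tendsto_finsetSum Finset.univ fun j _ => h j)

end truncWittNorm

namespace TruncatedWittVector

variable {p n : ℕ} {R : Type*} [CommRing R]

theorem coeff_out_eq_dite (x : TruncatedWittVector p n R) (i : ℕ) :
    x.out.coeff i = if h : i < n then x.coeff ⟨i, h⟩ else 0 :=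
  rfl

variable [Fact p.Prime]

theorem coeff_add_eq_peval (x y : TruncatedWittVector p n R) (j : Fin n) :
    (x + y).coeff j = peval (wittAdd p j) ![x.out.coeff, y.out.coeff] := by
  rw [← add_coeff, ← coeff_truncateFun, truncateFun_add, truncateFun_out, truncateFun_out]

theorem coeff_sub_eq_peval (x y : TruncatedWittVector p n R) (j : Fin n) :
    (x - y).coeff j = peval (wittSub p j) ![x.out.coeff, y.out.coeff] := by
  rw [← sub_coeff, ← coeff_truncateFun, truncateFun_sub, truncateFun_out, truncateFun_out]

end TruncatedWittVector

/-- Unlike Mathlib's `RingSeminorm`, `f (-x) = f x` is not required. -/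
structure IsNonarchSeminorm {A : Type*} [Ring A] (f : A → ℝ) : Prop where
  map_zero : f 0 = 0
  nonneg : ∀ x, 0 ≤ f x
  add_le_max : ∀ x y, f (x + y) ≤ max (f x) (f y)
  mul_le : ∀ x y, f (x * y) ≤ f x * f y

namespace IsNonarchSeminorm

variable {A : Type*} [CommRing A] {f : A → ℝ} {ι : Type*} {l : Filter ι}

theorem tendsto_add (hf : IsNonarchSeminorm f) {a b : ι → A}
    (ha : Tendsto (fun t => f (a t)) l (𝓝 0)) (hb : Tendsto (fun t => f (b t)) l (𝓝 0)) :
    Tendsto (fun t => f (a t + b t)) l (𝓝 0) := by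
  refine squeeze_zero (fun t => hf.nonneg _) (fun t => hf.add_le_max _ _) ?_
  simpa using ha.max hb

theorem tendsto_mul_of_le (hf : IsNonarchSeminorm f) {a b : ι → A}
    {B : ℝ} (ha : Tendsto (fun t => f (a t)) l (𝓝 0)) (hb : ∀ᶠ t in l, f (b t) ≤ B) :
    Tendsto (fun t => f (a t * b t)) l (𝓝 0) := by
  refine squeeze_zero' (.of_forall fun t => hf.nonneg _) ?_ (by simpa using ha.mul_const B)
  filter_upwards [hb] with t ht
  exact (hf.mul_le _ _).trans (mul_le_mul_of_nonneg_left ht (hf.nonneg _))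

theorem tendsto_sub_self (hf : IsNonarchSeminorm f) {σ : Type*} (x : ι → σ → A) (i : σ) :
    Tendsto (fun t => f (x t i - x t i)) l (𝓝 0) := by
  simpa [hf.map_zero] using tendsto_const_nhds

theorem exists_le_aeval (hf : IsNonarchSeminorm f) {σ : Type*} (B : ℝ) (φ : MvPolynomial σ ℤ) :
    ∃ C, 0 ≤ C ∧ ∀ g : σ → A, (∀ v, f (g v) ≤ B) → f (aeval g φ) ≤ C := by
  induction φ using MvPolynomial.induction_on with
  | C a => exact ⟨f (algebraMap ℤ A a), hf.nonneg _, fun g _ => by rw [aeval_C]⟩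
  | add φ ψ hφ hψ =>
    obtain ⟨C₁, hC₁, h₁⟩ := hφ
    obtain ⟨C₂, -, h₂⟩ := hψ
    refine ⟨max C₁ C₂, le_max_of_le_left hC₁, fun g hg => ?_⟩
    rw [map_add]
    exact (hf.add_le_max _ _).trans (max_le_max (h₁ g hg) (h₂ g hg))
  | mul_X φ v hφ =>
    obtain ⟨C, hC, h⟩ := hφ
    refine ⟨C * max B 0, by positivity, fun g hg => ?_⟩
    rw [map_mul, aeval_X]
    exact (hf.mul_le _ _).trans
      (mul_le_mul (h g hg) ((hg v).trans (le_max_left _ _)) (hf.nonneg _) hC)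

theorem tendsto_aeval_sub_aeval (hf : IsNonarchSeminorm f) {σ : Type*}
    {g h : ι → σ → A} {B : ℝ} (hg : ∀ᶠ t in l, ∀ v, f (g t v) ≤ B)
    (hh : ∀ᶠ t in l, ∀ v, f (h t v) ≤ B)
    (hgh : ∀ v, Tendsto (fun t => f (g t v - h t v)) l (𝓝 0)) (φ : MvPolynomial σ ℤ) :
    Tendsto (fun t => f (aeval (g t) φ - aeval (h t) φ)) l (𝓝 0) := by
  induction φ using MvPolynomial.induction_on with
  | C a => simpa [hf.map_zero] using tendsto_const_nhds
  | add φ ψ hφ hψ =>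
    simpa only [map_add, add_sub_add_comm] using hf.tendsto_add hφ hψ
  | mul_X φ v hφ =>
    obtain ⟨C, -, hC⟩ := hf.exists_le_aeval B φ
    have key : ∀ t, aeval (g t) (φ * X v) - aeval (h t) (φ * X v)
        = (aeval (g t) φ - aeval (h t) φ) * g t v + (g t v - h t v) * aeval (h t) φ := by
      intro t; simp only [map_mul, aeval_X]; ring
    simp only [key]
    exact hf.tendsto_add (hf.tendsto_mul_of_le hφ (hg.mono fun t ht => ht v))
      (hf.tendsto_mul_of_le (hgh v) (hh.mono fun t ht => hC _ ht))

theorem exists_le_peval (hf : IsNonarchSeminorm f) (B : ℝ) (φ : MvPolynomial (Fin 2 × ℕ) ℤ) :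
    ∃ C, ∀ x y : ℕ → A, (∀ i, f (x i) ≤ B) → (∀ i, f (y i) ≤ B) → f (peval φ ![x, y]) ≤ C := by
  obtain ⟨C, -, hC⟩ := hf.exists_le_aeval B φ
  exact ⟨C, fun x y hx hy => hC _ (Prod.forall.2 (Fin.forall_fin_two.2 ⟨hx, hy⟩))⟩

theorem tendsto_peval_sub_peval (hf : IsNonarchSeminorm f) {x y x' y' : ι → ℕ → A} {B : ℝ}
    (hx : ∀ᶠ t in l, ∀ i, f (x t i) ≤ B) (hy : ∀ᶠ t in l, ∀ i, f (y t i) ≤ B)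
    (hx' : ∀ᶠ t in l, ∀ i, f (x' t i) ≤ B) (hy' : ∀ᶠ t in l, ∀ i, f (y' t i) ≤ B)
    (hxx' : ∀ i, Tendsto (fun t => f (x t i - x' t i)) l (𝓝 0))
    (hyy' : ∀ i, Tendsto (fun t => f (y t i - y' t i)) l (𝓝 0))
    (φ : MvPolynomial (Fin 2 × ℕ) ℤ) :
    Tendsto (fun t => f (peval φ ![x t, y t] - peval φ ![x' t, y' t])) l (𝓝 0) := by
  refine hf.tendsto_aeval_sub_aeval (B := B) ?_ ?_
    (Prod.forall.2 (Fin.forall_fin_two.2 ⟨hxx', hyy'⟩)) φ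
  · filter_upwards [hx, hy] with t htx hty
    exact Prod.forall.2 (Fin.forall_fin_two.2 ⟨htx, hty⟩)
  · filter_upwards [hx', hy'] with t htx hty
    exact Prod.forall.2 (Fin.forall_fin_two.2 ⟨htx, hty⟩)

variable {p n : ℕ}

theorem coeff_out_le (hf : IsNonarchSeminorm f) {x : TruncatedWittVector p n A} {B : ℝ}
    (hB : 0 ≤ B) (hx : ∀ j, f (x.coeff j) ≤ B) (i : ℕ) : f (x.out.coeff i) ≤ B := by
  rw [TruncatedWittVector.coeff_out_eq_dite]
  split_ifs
  · exact hx _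
  · rwa [hf.map_zero]

theorem eventually_coeff_out_le (hf : IsNonarchSeminorm f) {x : ι → TruncatedWittVector p n A}
    {B : ℝ} (hB : 0 ≤ B) (hx : ∀ᶠ t in l, ∀ j, f ((x t).coeff j) ≤ B) :
    ∀ᶠ t in l, ∀ i, f ((x t).out.coeff i) ≤ B :=
  hx.mono fun _ ht => hf.coeff_out_le hB ht

theorem tendsto_coeff_out_sub (hf : IsNonarchSeminorm f) {x y : ι → TruncatedWittVector p n A}
    (h : ∀ j, Tendsto (fun t => f ((x t).coeff j - (y t).coeff j)) l (𝓝 0)) (i : ℕ) :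
    Tendsto (fun t => f ((x t).out.coeff i - (y t).out.coeff i)) l (𝓝 0) := by
  simp only [TruncatedWittVector.coeff_out_eq_dite]
  split_ifs
  · exact h _
  · simpa [hf.map_zero] using tendsto_const_nhds

variable [Fact p.Prime]

theorem exists_coeff_add_le (hf : IsNonarchSeminorm f) {B : ℝ} (hB : 0 ≤ B) :
    ∃ C, ∀ x y : TruncatedWittVector p n A, (∀ j, f (x.coeff j) ≤ B) → (∀ j, f (y.coeff j) ≤ B) →
      ∀ j, f ((x + y).coeff j) ≤ C := by
  choose C hC using fun j : Fin n => hf.exists_le_peval B (wittAdd p j)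
  obtain ⟨M, hM⟩ := Finite.exists_le C
  refine ⟨M, fun x y hx hy j => ?_⟩
  rw [TruncatedWittVector.coeff_add_eq_peval]
  exact (hC j _ _ (hf.coeff_out_le hB hx) (hf.coeff_out_le hB hy)).trans (hM j)

theorem tendsto_coeff_sub (hf : IsNonarchSeminorm f) {x y : ι → TruncatedWittVector p n A} {B : ℝ}
    (hx : ∀ᶠ t in l, ∀ j, f ((x t).coeff j) ≤ B) (hy : ∀ᶠ t in l, ∀ j, f ((y t).coeff j) ≤ B)
    (h : ∀ j, Tendsto (fun t => f ((x t).coeff j - (y t).coeff j)) l (𝓝 0)) (j : Fin n) :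
    Tendsto (fun t => f ((x t - y t).coeff j)) l (𝓝 0) := by
  have hB := le_max_right B 0
  have hx' := hf.eventually_coeff_out_le hB (hx.mono fun _ ht i => (ht i).trans (le_max_left _ _))
  have hy' := hf.eventually_coeff_out_le hB (hy.mono fun _ ht i => (ht i).trans (le_max_left _ _))
  -- `x - y` is compared with `y - y = 0`
  have := hf.tendsto_peval_sub_peval hx' hy' hy' hy' (hf.tendsto_coeff_out_sub h)
    (hf.tendsto_sub_self _) (wittSub p j)
  simpa only [← TruncatedWittVector.coeff_sub_eq_peval, sub_self, TruncatedWittVector.coeff_zero,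
    sub_zero] using this

theorem tendsto_sub_coeff (hf : IsNonarchSeminorm f) {x y : ι → TruncatedWittVector p n A} {B : ℝ}
    (hy : ∀ᶠ t in l, ∀ j, f ((y t).coeff j) ≤ B)
    (h : ∀ j, Tendsto (fun t => f ((x t - y t).coeff j)) l (𝓝 0)) (j : Fin n) :
    Tendsto (fun t => f ((x t).coeff j - (y t).coeff j)) l (𝓝 0) := by
  have hB : 0 ≤ max B 1 := le_max_of_le_right zero_le_one
  have hxy : ∀ᶠ t in l, ∀ i, f ((x t - y t).coeff i) ≤ max B 1 :=
    eventually_all.2 fun i => (h i).eventually (ge_mem_nhds (lt_max_of_lt_right one_pos))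
  have h0 : ∀ᶠ t in l, ∀ i, f ((0 : TruncatedWittVector p n A).coeff i) ≤ max B 1 :=
    .of_forall fun _ i => by rwa [TruncatedWittVector.coeff_zero, hf.map_zero]
  have hy' := hf.eventually_coeff_out_le hB (hy.mono fun _ ht i => (ht i).trans (le_max_left _ _))
  -- `x = (x - y) + y` is compared with `y = 0 + y`
  have := hf.tendsto_peval_sub_peval (hf.eventually_coeff_out_le hB hxy) hy'
    (hf.eventually_coeff_out_le (x := fun _ => 0) hB h0) hy'
    (hf.tendsto_coeff_out_sub (y := fun _ => 0) (by simpa using h)) (hf.tendsto_sub_self _)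
    (wittAdd p j)
  simpa only [← TruncatedWittVector.coeff_add_eq_peval, sub_add_cancel, zero_add] using this

theorem exists_eventually_coeff_le_of_cauchy (hf : IsNonarchSeminorm f)
    {s : ℕ → TruncatedWittVector p n A}
    (hs : ∀ j, Tendsto (fun q : ℕ × ℕ => f ((s q.1 - s q.2).coeff j)) (atTop ×ˢ atTop) (𝓝 0)) :
    ∃ B, ∀ᶠ m in atTop, ∀ j, f ((s m).coeff j) ≤ B := by
  have hs1 := eventually_all.2 fun j => (hs j).eventually (ge_mem_nhds one_pos)
  rw [prod_atTop_atTop_eq, eventually_atTop_prod_self] at hs1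
  obtain ⟨N, hN⟩ := hs1
  obtain ⟨B, hB⟩ := Finite.exists_le fun j => f ((s N).coeff j)
  obtain ⟨C, hC⟩ := hf.exists_coeff_add_le (p := p) (n := n)
    (le_max_of_le_right zero_le_one : 0 ≤ max B 1)
  refine ⟨C, eventually_atTop.2 ⟨N, fun m hm j => ?_⟩⟩
  simpa using hC (s m - s N) (s N) (fun i => (hN m N hm le_rfl i).trans (le_max_right _ _))
    (fun i => (hB i).trans (le_max_left _ _)) j

theorem seqComplete_truncWittNorm (hf : IsNonarchSeminorm f) (hA : SeqComplete f) :
    SeqComplete (truncWittNorm p f n) := by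
  intro s hs
  rw [tendsto_truncWittNorm_nhds_zero_iff hf.nonneg] at hs
  obtain ⟨B, hB⟩ := hf.exists_eventually_coeff_le_of_cauchy hs
  have hcoeff := hf.tendsto_sub_coeff (tendsto_snd.eventually hB) hs
  choose a ha using fun j => hA (fun m => (s m).coeff j) (hcoeff j)
  obtain ⟨Ba, hBa⟩ := Finite.exists_le fun j => f (a j)
  refine ⟨TruncatedWittVector.mk p a, (tendsto_truncWittNorm_nhds_zero_iff hf.nonneg).2 ?_⟩
  refine hf.tendsto_coeff_sub (B := max B Ba)
    (hB.mono fun _ hm j => (hm j).trans (le_max_left _ _)) (.of_forall fun _ j => ?_) ?_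
  · rw [TruncatedWittVector.coeff_mk]
    exact (hBa j).trans (le_max_right _ _)
  · simpa only [TruncatedWittVector.coeff_mk] using ha

end IsNonarchSeminorm

/-- If `A` is complete with respect to a nonarchimedean submultiplicative seminorm `f`
(every Cauchy sequence converges), then `W_{pⁿ}(A)` is complete with respect to `|·|_W`. -/
theorem stmt17 (p : ℕ) [Fact p.Prime] (A : Type*) [CommRing A] (f : A → ℝ)
    (hf0 : f 0 = 0) (hnonneg : ∀ x : A, 0 ≤ f x)
    (hadd : ∀ x y : A, f (x + y) ≤ max (f x) (f y))
    (hmul : ∀ x y : A, f (x * y) ≤ f x * f y)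
    (hcomplete : ∀ s : ℕ → A,
      (∀ ε : ℝ, 0 < ε → ∃ N : ℕ, ∀ m k : ℕ, N ≤ m → N ≤ k → f (s m - s k) < ε) →
      ∃ a : A, ∀ ε : ℝ, 0 < ε → ∃ N : ℕ, ∀ m : ℕ, N ≤ m → f (s m - a) < ε)
    (n : ℕ) :
    ∀ s : ℕ → TruncatedWittVector p (n + 1) A,
      (∀ ε : ℝ, 0 < ε → ∃ N : ℕ, ∀ m k : ℕ, N ≤ m → N ≤ k →
        truncWittNorm p f n (s m - s k) < ε) →
      ∃ a : TruncatedWittVector p (n + 1) A, ∀ ε : ℝ, 0 < ε →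
        ∃ N : ℕ, ∀ m : ℕ, N ≤ m → truncWittNorm p f n (s m - a) < ε := by
  have hf : IsNonarchSeminorm f := ⟨hf0, hnonneg, hadd, hmul⟩
  exact (seqComplete_iff (truncWittNorm_nonneg hnonneg)).1
    (hf.seqComplete_truncWittNorm ((seqComplete_iff hnonneg).2 hcomplete))
end

section
/- In the ring of p-typical Witt vectors W(ℤ), write p^m = (z₀, z₁, z₂, …) for a nonnegative integer m. Then z₀ = p^m, z_i ∈ p^{m-i}·ℤ for i = 1, …, m−1, and z_m ≡ 1 (mod p). -/
/-!
The ghost components of `p ^ m` are all equal to `p ^ m`, so its Witt components `z_i` satisfy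
`∑_{i ≤ n} p^i z_i^{p^{n-i}} = p^m` for every `n`. Solving the `n`-th equation for `p^n z_n`, strong
induction gives `p^{m-n} ∣ z_n` for `n ≤ m`: the earlier terms are divisible by
`p^{i + (m-i) p^{n-i}}`. For `n = m` these terms are even divisible by `p^{m+1}`, because
`(m - i) p^{m-i} ≥ 2 (m - i) > m - i` for `i < m`, so `p^m z_m ≡ p^m (mod p^{m+1})`.
-/

open WittVector Finset

theorem pow_dvd_sum_range_pow_mul_pow_pow {p : ℕ} {z : ℕ → ℤ} {m n e : ℕ}
    (hz : ∀ i < n, (p : ℤ) ^ (m - i) ∣ z i) (he : ∀ i < n, e ≤ i + (m - i) * p ^ (n - i)) :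
    (p : ℤ) ^ e ∣ ∑ i ∈ range n, (p : ℤ) ^ i * z i ^ p ^ (n - i) := by
  refine dvd_sum fun i hi => ?_
  rw [mem_range] at hi
  calc (p : ℤ) ^ e ∣ (p : ℤ) ^ (i + (m - i) * p ^ (n - i)) := pow_dvd_pow _ (he i hi)
    _ = (p : ℤ) ^ i * ((p : ℤ) ^ (m - i)) ^ p ^ (n - i) := by rw [pow_add, pow_mul]
    _ ∣ (p : ℤ) ^ i * z i ^ p ^ (n - i) := mul_dvd_mul_left _ (pow_dvd_pow_of_dvd (hz i hi) _)

namespace WittVector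

variable {p : ℕ} [Fact p.Prime]

theorem ghostComponent_natCast_pow (m n : ℕ) :
    ghostComponent n ((p : WittVector p ℤ) ^ m) = (p : ℤ) ^ m := by
  rw [map_pow, map_natCast]

theorem pow_mul_coeff_eq_ghostComponent_sub (x : WittVector p ℤ) (n : ℕ) :
    (p : ℤ) ^ n * x.coeff n =
      ghostComponent n x - ∑ i ∈ range n, (p : ℤ) ^ i * x.coeff i ^ p ^ (n - i) := by
  rw [ghostComponent_apply, aeval_wittPolynomial, sum_range_succ, Nat.sub_self, pow_zero, pow_one]
  ring

theorem coeff_zero_eq_ghostComponent_zero (x : WittVector p ℤ) :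
    x.coeff 0 = ghostComponent 0 x := by
  simpa using pow_mul_coeff_eq_ghostComponent_sub x 0

section GhostComponentsEqPow

variable {x : WittVector p ℤ} {m : ℕ}

theorem pow_sub_dvd_coeff_of_ghostComponent_eq
    (hx : ∀ n ≤ m, ghostComponent n x = (p : ℤ) ^ m) : ∀ n ≤ m, (p : ℤ) ^ (m - n) ∣ x.coeff n := by
  intro n
  induction n using Nat.strong_induction_on with
  | _ n ih =>
    intro hn
    have hp : (p : ℤ) ^ n ≠ 0 := pow_ne_zero _ (Nat.cast_ne_zero.mpr (Fact.out : p.Prime).ne_zero)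
    have hsum : (p : ℤ) ^ m ∣ ∑ i ∈ range n, (p : ℤ) ^ i * x.coeff i ^ p ^ (n - i) :=
      pow_dvd_sum_range_pow_mul_pow_pow (fun i hi => ih i hi (by omega)) fun i hi => by
        have : 1 ≤ p ^ (n - i) := Nat.one_le_pow _ _ (Fact.out : p.Prime).pos
        nlinarith [Nat.sub_add_cancel (hi.le.trans hn)]
    rw [← mul_dvd_mul_iff_left hp, ← pow_add, Nat.add_sub_cancel' hn,
      pow_mul_coeff_eq_ghostComponent_sub, hx n hn]
    exact dvd_sub dvd_rfl hsum

theorem dvd_coeff_sub_one_of_ghostComponent_eq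
    (hx : ∀ n ≤ m, ghostComponent n x = (p : ℤ) ^ m) : (p : ℤ) ∣ x.coeff m - 1 := by
  have hp : (p : ℤ) ^ m ≠ 0 := pow_ne_zero _ (Nat.cast_ne_zero.mpr (Fact.out : p.Prime).ne_zero)
  have hsum : (p : ℤ) ^ (m + 1) ∣ ∑ i ∈ range m, (p : ℤ) ^ i * x.coeff i ^ p ^ (m - i) :=
    pow_dvd_sum_range_pow_mul_pow_pow
      (fun i hi => pow_sub_dvd_coeff_of_ghostComponent_eq hx i hi.le) fun i hi => by
        have : 2 ≤ p ^ (m - i) := (Fact.out : p.Prime).two_le.trans (Nat.le_self_pow (by omega) p)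
        nlinarith [Nat.sub_add_cancel hi.le]
  rw [← mul_dvd_mul_iff_left hp, ← pow_succ, mul_sub, mul_one,
    pow_mul_coeff_eq_ghostComponent_sub, hx m le_rfl, sub_sub_cancel_left]
  exact hsum.neg_right

end GhostComponentsEqPow

end WittVector

/-- Writing `p^m = (z₀, z₁, z₂, …)` in the `p`-typical Witt vectors `W(ℤ)`, one has
`z₀ = p^m`, `p^{m-i} ∣ z_i` for `i = 1, …, m-1`, and `z_m ≡ 1 (mod p)`. -/
theorem stmt19 (p : ℕ) [Fact p.Prime] (m : ℕ) :
    ((p : WittVector p ℤ) ^ m).coeff 0 = (p : ℤ) ^ m ∧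
    (∀ i : ℕ, 1 ≤ i → i ≤ m - 1 →
      (p : ℤ) ^ (m - i) ∣ ((p : WittVector p ℤ) ^ m).coeff i) ∧
    (p : ℤ) ∣ ((p : WittVector p ℤ) ^ m).coeff m - 1 := by
  have hx : ∀ n ≤ m, ghostComponent n ((p : WittVector p ℤ) ^ m) = (p : ℤ) ^ m :=
    fun n _ => ghostComponent_natCast_pow m n
  refine ⟨?_, fun i _ hi => pow_sub_dvd_coeff_of_ghostComponent_eq hx i (by omega),
    dvd_coeff_sub_one_of_ghostComponent_eq hx⟩
  rw [coeff_zero_eq_ghostComponent_zero, ghostComponent_natCast_pow]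
end
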